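/- arXiv:1409.3811 — 5 statements merged into one kernel-verified Lean document; each statement's English description precedes it below -/
import Mathlib

section
/- Let $\Lambda \subseteq \mathbb{R}^n$ be a convex set with $[0,1]^n \subseteq \Lambda \subseteq n^{3/2}[0,1]^n$ (the dilate taken about the center of the unit cube). For every $\epsilon \in (0,1)$ there exists a finite collection $\{C_j\}$ of almost everywhere pairwise disjoint dyadic cubes contained in $\Lambda$, each of sidelength comparable (with dimensional constants) to $\epsilon$, such that $|\Lambda \setminus \bigcup_j C_j| < \epsilon |\Lambda|$. -/
open MeasureTheory Set

/-- The closed unit cube `[0,1]ⁿ`. -/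
def unitCube (n : ℕ) : Set (Fin n → ℝ) := {x | ∀ i, x i ∈ Set.Icc (0 : ℝ) 1}

/-- The dyadic cube `2^{-m}(k + [0,1]ⁿ)`. -/
def dyadicCube (n : ℕ) (m : ℕ) (k : Fin n → ℤ) : Set (Fin n → ℝ) :=
  {x | ∀ i, x i ∈ Set.Icc ((k i : ℝ) / 2 ^ m) (((k i : ℝ) + 1) / 2 ^ m)}

/-!
Shrink `Λ` towards the centre `p` of the unit cube by the factor `1 - δ`, with `δ ≍ ε / n`.
Since `Λ` is convex and contains `[0,1]ⁿ`, the sup-norm ball of radius `1/2` about `p`, every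
point of the shrunken set `Λ'` is the centre of a sup-norm ball of radius `δ/2` inside `Λ`. Hence
the dyadic cubes of side `≈ δ/2` meeting `Λ'` lie in `Λ` and cover `Λ'`; there are finitely many
of them because `Λ` is bounded, and by Bernoulli's inequality
`|Λ \ Λ'| = (1 - (1 - δ)ⁿ) |Λ| ≤ n δ |Λ| < ε |Λ|`.
-/

open Metric AffineMap

section Convex

variable {E : Type*} [NormedAddCommGroup E] [NormedSpace ℝ E]

theorem Convex.image_homothety_subset {s : Set E} (hs : Convex ℝ s) {p : E} (hp : p ∈ s)
    {t : ℝ} (ht : t ∈ Icc 0 1) : homothety p t '' s ⊆ s := by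
  rintro _ ⟨z, hz, rfl⟩
  rw [homothety_eq_lineMap]
  exact hs.lineMap_mem hp hz ht

theorem Convex.closedBall_homothety_subset {s : Set E} (hs : Convex ℝ s) {p z : E} {r δ : ℝ}
    (hball : closedBall p r ⊆ s) (hz : z ∈ s) (hδ0 : 0 < δ) (hδ1 : δ ≤ 1) :
    closedBall (homothety p (1 - δ) z) (δ * r) ⊆ s := by
  intro y hy
  set w := p + δ⁻¹ • (y - homothety p (1 - δ) z)
  have hw : w ∈ closedBall p r := by
    rw [mem_closedBall, dist_eq_norm, add_sub_cancel_left, norm_smul, norm_inv,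
      Real.norm_of_nonneg hδ0.le, inv_mul_le_iff₀ hδ0, ← dist_eq_norm]
    exact hy
  have hyw : y = (1 - δ) • z + δ • w := by
    simp only [w, homothety_apply, vsub_eq_sub, vadd_eq_add, smul_add, smul_smul,
      mul_inv_cancel₀ hδ0.ne', one_smul]
    module
  rw [hyw]
  exact hs hz (hball hw) (by linarith) hδ0.le (by ring)

variable [MeasurableSpace E] [BorelSpace E] [FiniteDimensional ℝ E]

theorem Convex.measure_diff_image_homothety_le (μ : Measure E) [μ.IsAddHaarMeasure] {s : Set E}
    (hs : Convex ℝ s) {p : E} (hp : p ∈ s) (hμs : μ s ≠ ⊤) {δ : ℝ} (hδ0 : 0 ≤ δ) (hδ1 : δ ≤ 1) :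
    μ (s \ homothety p (1 - δ) '' s) ≤ ENNReal.ofReal (Module.finrank ℝ E * δ) * μ s := by
  set d := Module.finrank ℝ E
  have hsub : homothety p (1 - δ) '' s ⊆ s :=
    hs.image_homothety_subset hp ⟨by linarith, by linarith⟩
  have hbernoulli : 1 - d * δ ≤ (1 - δ) ^ d := by
    simpa [sub_eq_add_neg] using one_add_mul_le_pow (a := -δ) (by linarith) d
  calc μ (s \ homothety p (1 - δ) '' s)
      = μ s - ENNReal.ofReal ((1 - δ) ^ d) * μ s := by
        rw [measure_sdiff hsub ((hs.affine_image _).nullMeasurableSet (μ := μ))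
          (ne_top_of_le_ne_top hμs (measure_mono hsub)), Measure.addHaar_image_homothety,
          abs_of_nonneg (pow_nonneg (by linarith) _)]
    _ = ENNReal.ofReal (1 - (1 - δ) ^ d) * μ s := by
        rw [ENNReal.ofReal_sub _ (pow_nonneg (by linarith) _), ENNReal.ofReal_one,
          ENNReal.sub_mul (fun _ _ => hμs), one_mul]
    _ ≤ ENNReal.ofReal (d * δ) * μ s := by
        gcongr
        linarith

end Convex

theorem exists_inv_two_pow_mem_Ico {a : ℝ} (ha0 : 0 < a) (ha1 : a ≤ 1) :
    ∃ m : ℕ, ((2 : ℝ) ^ m)⁻¹ ∈ Ico (a / 2) a := by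
  obtain ⟨m, hle, hlt⟩ := exists_nat_pow_near (one_le_inv_iff₀.2 ⟨ha0, ha1⟩) one_lt_two
  refine ⟨m + 1, ?_, ?_⟩
  · rw [pow_succ, mul_inv, ← div_eq_mul_inv]
    gcongr
    exact (le_inv_comm₀ ha0 (by positivity : (0 : ℝ) < 2 ^ m)).2 hle
  · exact (inv_lt_comm₀ (by positivity) ha0).2 hlt

section DyadicCube

variable {n : ℕ}

theorem dyadicCube_eq_pi (m : ℕ) (k : Fin n → ℤ) :
    dyadicCube n m k = univ.pi fun i => Icc ((k i : ℝ) / 2 ^ m) (((k i : ℝ) + 1) / 2 ^ m) := by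
  ext x
  simp [dyadicCube, Pi.le_def, forall_and]

theorem mem_dyadicCube_iff {m : ℕ} {k : Fin n → ℤ} {x : Fin n → ℝ} :
    x ∈ dyadicCube n m k ↔ ∀ i, (k i : ℝ) ≤ 2 ^ m * x i ∧ 2 ^ m * x i ≤ k i + 1 := by
  simp only [dyadicCube, mem_ofPred_eq, mem_Icc, div_le_iff₀ (by positivity : (0 : ℝ) < 2 ^ m),
    le_div_iff₀ (by positivity : (0 : ℝ) < 2 ^ m), mul_comm (x _)]

theorem mem_dyadicCube_floor (m : ℕ) (x : Fin n → ℝ) :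
    x ∈ dyadicCube n m (fun i => ⌊2 ^ m * x i⌋) :=
  mem_dyadicCube_iff.2 fun _ => ⟨Int.floor_le _, (Int.lt_floor_add_one _).le⟩

theorem volume_dyadicCube_inter_of_ne {m : ℕ} {k k' : Fin n → ℤ} (hkk' : k ≠ k') :
    volume (dyadicCube n m k ∩ dyadicCube n m k') = 0 := by
  obtain ⟨i, hi⟩ := Function.ne_iff.mp hkk'
  rw [dyadicCube_eq_pi, dyadicCube_eq_pi, ← pi_inter_distrib, volume_pi_pi]
  refine Finset.prod_eq_zero (Finset.mem_univ i) ?_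
  rw [Icc_inter_Icc, Real.volume_Icc, ENNReal.ofReal_eq_zero, sub_nonpos]
  rcases hi.lt_or_gt with h | h
  · have h' : ((k i : ℝ) + 1) / 2 ^ m ≤ k' i / 2 ^ m := by gcongr; exact_mod_cast h
    exact inf_le_left.trans (h'.trans le_sup_right)
  · have h' : ((k' i : ℝ) + 1) / 2 ^ m ≤ k i / 2 ^ m := by gcongr; exact_mod_cast h
    exact inf_le_right.trans (h'.trans le_sup_left)

theorem dyadicCube_subset_closedBall {m : ℕ} {k : Fin n → ℤ} {x : Fin n → ℝ}
    (hx : x ∈ dyadicCube n m k) : dyadicCube n m k ⊆ closedBall x (2 ^ m)⁻¹ := by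
  intro y hy
  rw [mem_closedBall, dist_pi_le_iff (by positivity)]
  intro i
  have hside : ((k i : ℝ) + 1) / 2 ^ m - k i / 2 ^ m = (2 ^ m)⁻¹ := by ring
  rw [Real.dist_eq, abs_sub_le_iff]
  constructor <;> linarith [(hx i).1, (hx i).2, (hy i).1, (hy i).2]

theorem finite_setOf_dyadicCube_inter_nonempty (m : ℕ) {s : Set (Fin n → ℝ)}
    (hs : Bornology.IsBounded s) : {k | (dyadicCube n m k ∩ s).Nonempty}.Finite := by
  obtain ⟨R, hR⟩ := hs.subset_closedBall 0
  refine (Set.Finite.pi fun _ => Set.finite_Icc (⌈-(2 ^ m * R)⌉ - 1) ⌊2 ^ m * R⌋).subset ?_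
  rintro k ⟨x, hxk, hxs⟩ i -
  have hxi : |x i| ≤ R := by
    simpa [Real.dist_eq] using (dist_le_pi_dist x 0 i).trans (mem_closedBall.1 (hR hxs))
  have h2m : (0 : ℝ) < 2 ^ m := by positivity
  obtain ⟨hlo, hhi⟩ := mem_dyadicCube_iff.1 hxk i
  obtain ⟨hRlo, hRhi⟩ := abs_le.1 hxi
  constructor
  · rw [sub_le_iff_le_add, Int.ceil_le]
    push_cast
    nlinarith
  · rw [Int.le_floor]
    nlinarith

theorem exists_finset_dyadicCube_cover (m : ℕ) {s t : Set (Fin n → ℝ)}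
    (ht : Bornology.IsBounded t) (hts : ∀ x ∈ t, closedBall x (2 ^ m)⁻¹ ⊆ s) :
    ∃ K : Finset (Fin n → ℤ), (∀ k ∈ K, dyadicCube n m k ⊆ s) ∧
      t ⊆ ⋃ k ∈ K, dyadicCube n m k := by
  refine ⟨(finite_setOf_dyadicCube_inter_nonempty m ht).toFinset, ?_, ?_⟩
  · intro k hk
    obtain ⟨x, hxk, hxt⟩ := (Set.Finite.mem_toFinset _).1 hk
    exact (dyadicCube_subset_closedBall hxk).trans (hts x hxt)
  · intro x hx
    exact mem_biUnion ((Set.Finite.mem_toFinset _).2 ⟨x, mem_dyadicCube_floor m x, hx⟩)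
      (mem_dyadicCube_floor m x)

end DyadicCube

theorem unitCube_eq_closedBall (n : ℕ) : unitCube n = closedBall (fun _ => 1 / 2) (1 / 2) := by
  ext x
  simp only [unitCube, mem_ofPred_eq, mem_closedBall, dist_pi_le_iff (by norm_num : (0:ℝ) ≤ 1 / 2),
    Real.dist_eq, abs_sub_le_iff, mem_Icc]
  refine forall_congr' fun i => ?_
  constructor <;> intro h <;> constructor <;> linarith [h.1, h.2]

theorem Convex.exists_finset_dyadicCube_measure_diff_le {n : ℕ} {Λ : Set (Fin n → ℝ)}
    (hconv : Convex ℝ Λ) (hbdd : Bornology.IsBounded Λ) {p : Fin n → ℝ} {r δ : ℝ}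
    (hball : closedBall p r ⊆ Λ) (hδ0 : 0 < δ) (hδ1 : δ ≤ 1) {m : ℕ} (hm : (2 ^ m)⁻¹ ≤ δ * r) :
    ∃ K : Finset (Fin n → ℤ), (∀ k ∈ K, dyadicCube n m k ⊆ Λ) ∧
      volume (Λ \ ⋃ k ∈ K, dyadicCube n m k) ≤ ENNReal.ofReal (n * δ) * volume Λ := by
  have hr : 0 ≤ r := nonneg_of_mul_nonneg_right ((inv_pos.2 (by positivity)).le.trans hm) hδ0
  have hp : p ∈ Λ := hball (mem_closedBall_self hr)
  have hmargin : ∀ x ∈ homothety p (1 - δ) '' Λ, closedBall x (2 ^ m)⁻¹ ⊆ Λ := by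
    rintro _ ⟨z, hz, rfl⟩
    exact (closedBall_subset_closedBall hm).trans
      (hconv.closedBall_homothety_subset hball hz hδ0 hδ1)
  obtain ⟨K, hKΛ, hcover⟩ := exists_finset_dyadicCube_cover m
    (hbdd.subset (hconv.image_homothety_subset hp ⟨by linarith, by linarith⟩)) hmargin
  refine ⟨K, hKΛ, ?_⟩
  calc volume (Λ \ ⋃ k ∈ K, dyadicCube n m k)
      ≤ volume (Λ \ homothety p (1 - δ) '' Λ) := measure_mono (sdiff_subset_sdiff_right hcover)
    _ ≤ ENNReal.ofReal (n * δ) * volume Λ := by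
        simpa using hconv.measure_diff_image_homothety_le volume hp hbdd.measure_lt_top.ne
          hδ0.le hδ1

theorem convex_dyadic_approximation_general (n : ℕ) :
    ∃ c C : ℝ, 0 < c ∧ 0 < C ∧
      ∀ Λ : Set (Fin n → ℝ), Convex ℝ Λ →
        unitCube n ⊆ Λ →
        Λ ⊆ AffineMap.homothety (fun _ => (1 : ℝ) / 2) ((n : ℝ) ^ ((3 : ℝ) / 2)) '' unitCube n →
        ∀ ε ∈ Set.Ioo (0 : ℝ) 1,
          ∃ cubes : Finset (ℕ × (Fin n → ℤ)),
            (∀ p ∈ cubes, dyadicCube n p.1 p.2 ⊆ Λ ∧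
              c * ε ≤ ((2 : ℝ) ^ p.1)⁻¹ ∧ ((2 : ℝ) ^ p.1)⁻¹ ≤ C * ε) ∧
            (∀ p ∈ cubes, ∀ q ∈ cubes, p ≠ q →
              volume (dyadicCube n p.1 p.2 ∩ dyadicCube n q.1 q.2) = 0) ∧
            volume (Λ \ ⋃ p ∈ cubes, dyadicCube n p.1 p.2) < ENNReal.ofReal ε * volume Λ := by
  refine ⟨1 / (8 * (n + 1)), 1 / (4 * (n + 1)), by positivity, by positivity, ?_⟩
  intro Λ hconv hcube hΛ ε ⟨hε0, hε1⟩
  rw [unitCube_eq_closedBall] at hcube hΛ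
  set δ : ℝ := ε / (2 * (n + 1))
  have hδ0 : 0 < δ := by positivity
  have hδ1 : δ ≤ 1 := by rw [div_le_one (by positivity)]; linarith
  have hbdd : Bornology.IsBounded Λ :=
    ((isCompact_closedBall _ _).image (homothety_continuous _ _)).isBounded.subset hΛ
  have hpos : volume Λ ≠ 0 :=
    ((measure_closedBall_pos volume _ one_half_pos).trans_le (measure_mono hcube)).ne'
  obtain ⟨m, hm_lo, hm_hi⟩ := exists_inv_two_pow_mem_Ico (half_pos hδ0) (by linarith)
  obtain ⟨K, hKΛ, hvol⟩ := hconv.exists_finset_dyadicCube_measure_diff_le hbdd hcube hδ0 hδ1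
    (m := m) (by linarith)
  refine ⟨K.image (Prod.mk m), Finset.forall_mem_image.2 fun k hk => ⟨hKΛ k hk, ?_, ?_⟩,
    Finset.forall_mem_image.2 fun k _ => Finset.forall_mem_image.2 fun k' _ hne =>
      volume_dyadicCube_inter_of_ne fun h => hne (Prod.ext rfl h), ?_⟩
  · calc 1 / (8 * (n + 1)) * ε = δ / 2 / 2 := by simp only [δ]; field_simp; ring
      _ ≤ _ := hm_lo
  · calc ((2 : ℝ) ^ m)⁻¹ ≤ δ / 2 := hm_hi.le
      _ = 1 / (4 * (n + 1)) * ε := by simp only [δ]; field_simp; ring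
  have hnδ : n * δ < ε := by
    calc (n : ℝ) * δ = ε * (n / (2 * (n + 1))) := by ring
      _ < ε * 1 := by gcongr; rw [div_lt_one (by positivity)]; linarith
      _ = ε := mul_one ε
  rw [Finset.set_biUnion_finset_image]
  exact hvol.trans_lt (ENNReal.mul_lt_mul_left hpos hbdd.measure_lt_top.ne
    ((ENNReal.ofReal_lt_ofReal_iff hε0).2 hnδ))

/-- A convex set `Λ` with `[0,1]ⁿ ⊆ Λ ⊆ n^{3/2}[0,1]ⁿ` (dilate about the center of the unit
cube) can, for every `ε ∈ (0,1)`, be approximated from inside by a finite collection of a.e.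
pairwise disjoint dyadic cubes of sidelength comparable to `ε` (with dimensional constants),
up to a set of measure less than `ε|Λ|`. -/
theorem convex_dyadic_approximation (n : ℕ) (hn : 0 < n) :
    ∃ c C : ℝ, 0 < c ∧ 0 < C ∧
      ∀ Λ : Set (Fin n → ℝ), Convex ℝ Λ →
        unitCube n ⊆ Λ →
        Λ ⊆ AffineMap.homothety (fun _ => (1 : ℝ) / 2) ((n : ℝ) ^ ((3 : ℝ) / 2)) '' unitCube n →
        ∀ ε ∈ Set.Ioo (0 : ℝ) 1,
          ∃ cubes : Finset (ℕ × (Fin n → ℤ)),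
            (∀ p ∈ cubes, dyadicCube n p.1 p.2 ⊆ Λ ∧
              c * ε ≤ ((2 : ℝ) ^ p.1)⁻¹ ∧ ((2 : ℝ) ^ p.1)⁻¹ ≤ C * ε) ∧
            (∀ p ∈ cubes, ∀ q ∈ cubes, p ≠ q →
              volume (dyadicCube n p.1 p.2 ∩ dyadicCube n q.1 q.2) = 0) ∧
            volume (Λ \ ⋃ p ∈ cubes, dyadicCube n p.1 p.2) < ENNReal.ofReal ε * volume Λ :=
  convex_dyadic_approximation_general n
end

section
/- Let $\alpha \in (0,1)$, $0 < \epsilon < \min(\alpha, 1-\alpha)$, and let $\Lambda \subseteq \mathbb{R}^n$ be a convex set with $[0,1]^n \subseteq \Lambda \subseteq n^{3/2}[0,1]^n$. Suppose $E \subseteq \mathbb{R}^n$ is measurable with finite measure and $|E \cap \Lambda|/|\Lambda| = \alpha$. Then there exists a cube $R \subseteq \Lambda$ with $|R| \sim_n \epsilon^n$ such that $\frac{\alpha - \epsilon}{1 - \epsilon} \le \frac{|E \cap R|}{|R|} \le \frac{\alpha}{1 - \epsilon}$. -/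
open MeasureTheory Set

/-- The axes-parallel closed cube with lower corner `x0` and sidelength `h`. -/
def cube (n : ℕ) (x0 : Fin n → ℝ) (h : ℝ) : Set (Fin n → ℝ) :=
  {y | ∀ i, y i ∈ Set.Icc (x0 i) (x0 i + h)}

/-!
Work with the grid cubes of side `h = ε / (2 (n + 1))`. By convexity, the grid cube containing a
point of the shrunken copy `homothety c (1 - 2h) Λ` (`c` the centre of `[0,1]ⁿ`) lies in `Λ`, so
the grid cubes inside `Λ` miss only a set of measure at most `2nh |Λ| ≤ ε |Λ|`. Averaging over
them gives one grid cube of density at least `(α - ε) / (1 - ε)` and one of density at most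
`α / (1 - ε)`. Sliding the first cube linearly onto the second keeps it inside `Λ` by convexity,
and its density varies continuously (Lebesgue measure is continuous under translation), so the
intermediate value theorem yields a cube of side `h` with density in between.
-/

open Bornology Module
open scoped ENNReal symmDiff

section Density

variable {X : Type*} [MeasurableSpace X] {μ : Measure X} {E Λ K : Set X} {α ε : ℝ}

theorem mul_measureReal_le_measureReal_inter (hK : MeasurableSet K) (hKΛ : K ⊆ Λ)
    (hΛ : μ Λ ≠ ∞) (hα : α ≤ 1) (hε : ε < 1)
    (hdens : μ.real (E ∩ Λ) = α * μ.real Λ) (hlarge : (1 - ε) * μ.real Λ ≤ μ.real K) :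
    (α - ε) / (1 - ε) * μ.real K ≤ μ.real (E ∩ K) := by
  have hcover : μ.real (E ∩ Λ) ≤ μ.real (E ∩ K) + μ.real (Λ \ K) := by
    refine (measureReal_mono (fun x hx => ?_) ?_).trans (measureReal_union_le _ _)
    · by_cases hxK : x ∈ K
      exacts [Or.inl ⟨hx.1, hxK⟩, Or.inr ⟨hx.2, hxK⟩]
    · exact measure_union_ne_top (measure_ne_top_of_subset (inter_subset_right.trans hKΛ) hΛ)
        (measure_ne_top_of_subset sdiff_subset hΛ)
  rw [measureReal_sdiff hKΛ hK hΛ] at hcover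
  rw [div_mul_eq_mul_div, div_le_iff₀ (by linarith)]
  nlinarith

theorem measureReal_inter_le_mul_measureReal (hKΛ : K ⊆ Λ) (hΛ : μ Λ ≠ ∞) (hα : 0 ≤ α)
    (hε : ε < 1) (hdens : μ.real (E ∩ Λ) = α * μ.real Λ)
    (hlarge : (1 - ε) * μ.real Λ ≤ μ.real K) :
    μ.real (E ∩ K) ≤ α / (1 - ε) * μ.real K := by
  have hmono : μ.real (E ∩ K) ≤ μ.real (E ∩ Λ) :=
    measureReal_mono (inter_subset_inter_right E hKΛ)
      (measure_ne_top_of_subset inter_subset_right hΛ)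
  rw [div_mul_eq_mul_div, le_div_iff₀ (by linarith)]
  nlinarith

end Density

theorem continuous_measureReal_inter_preimage_sub {G : Type*} [AddGroup G] [TopologicalSpace G]
    [IsTopologicalAddGroup G] [MeasurableSpace G] [BorelSpace G] {μ : Measure G}
    [μ.IsAddRightInvariant] [μ.InnerRegularCompactLTTop] [IsLocallyFiniteMeasure μ]
    {E C : Set G} (hE : MeasurableSet E) (hC : MeasurableSet C) (hCfin : μ C ≠ ∞) :
    Continuous fun x : G => μ.real (E ∩ (· - x) ⁻¹' C) := by
  let f : C(G, C(G, G)) := ContinuousMap.curry ⟨fun p => p.2 - p.1, by fun_prop⟩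
  have hf : ∀ x, MeasurePreserving (f x) μ μ := fun x => measurePreserving_sub_right μ x
  have hpre : ∀ x, μ (f x ⁻¹' C) ≠ ∞ := fun x =>
    (hf x).measure_preimage hC.nullMeasurableSet ▸ hCfin
  rw [continuous_iff_continuousAt]
  intro x
  have hsymm : Filter.Tendsto (fun y => μ.real ((f y ⁻¹' C) ∆ (f x ⁻¹' C))) (nhds x) (nhds 0) :=
    ENNReal.toReal_zero ▸ (ENNReal.tendsto_toReal ENNReal.zero_ne_top).comp
      (tendsto_measure_symmDiff_preimage_nhds_zero (f.continuous.tendsto x) (.of_forall hf) (hf x)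
        hC.nullMeasurableSet hCfin)
  refine tendsto_iff_dist_tendsto_zero.2 <| squeeze_zero (fun _ => dist_nonneg) (fun y => ?_) hsymm
  calc dist (μ.real (E ∩ f y ⁻¹' C)) (μ.real (E ∩ f x ⁻¹' C))
      ≤ μ.real ((E ∩ f y ⁻¹' C) ∆ (E ∩ f x ⁻¹' C)) :=
        abs_measureReal_sub_le_measureReal_symmDiff'
          (hE.inter ((f y).continuous.measurable hC)).nullMeasurableSet
          (hE.inter ((f x).continuous.measurable hC)).nullMeasurableSet
          (measure_ne_top_of_subset inter_subset_right (hpre y))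
          (measure_ne_top_of_subset inter_subset_right (hpre x))
    _ ≤ μ.real ((f y ⁻¹' C) ∆ (f x ⁻¹' C)) := by
        rw [← inter_symmDiff_distrib_left]
        exact measureReal_mono inter_subset_right (measure_symmDiff_ne_top (hpre y) (hpre x))

section Cube

variable {n : ℕ}

theorem cube_eq_pi (x : Fin n → ℝ) (h : ℝ) :
    cube n x h = univ.pi fun i => Icc (x i) (x i + h) := by
  ext y
  simp only [cube, mem_ofPred_eq, mem_univ_pi]

theorem measurableSet_cube (x : Fin n → ℝ) (h : ℝ) : MeasurableSet (cube n x h) := by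
  rw [cube_eq_pi]
  exact .univ_pi fun _ => measurableSet_Icc

theorem volume_cube (x : Fin n → ℝ) (h : ℝ) : volume (cube n x h) = ENNReal.ofReal h ^ n := by
  rw [cube_eq_pi, volume_pi_pi]
  simp [Real.volume_Icc]

theorem measureReal_cube (x : Fin n → ℝ) {h : ℝ} (hh : 0 ≤ h) :
    volume.real (cube n x h) = h ^ n := by
  simp [measureReal_def, volume_cube, ENNReal.toReal_ofReal hh]

theorem unitCube_eq_Icc : unitCube n = Icc 0 1 := by
  ext y
  simp [unitCube, Pi.le_def, forall_and]

theorem volume_unitCube : volume (unitCube n) = 1 := by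
  simp [unitCube_eq_Icc, Real.volume_Icc_pi]

theorem cube_eq_preimage_sub (x : Fin n → ℝ) (h : ℝ) : cube n x h = (· - x) ⁻¹' cube n 0 h := by
  ext y
  simp only [cube, mem_ofPred_eq, mem_preimage, Pi.sub_apply, Pi.zero_apply, zero_add, mem_Icc,
    sub_nonneg, sub_le_iff_le_add']

theorem cube_inter_cube (a b : Fin n → ℝ) (h : ℝ) :
    cube n a h ∩ cube n b h = univ.pi fun i => Icc (max (a i) (b i)) (min (a i) (b i) + h) := by
  rw [cube_eq_pi, cube_eq_pi, ← pi_inter_distrib]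
  refine pi_congr rfl fun i _ => ?_
  rw [Icc_inter_Icc, min_add_add_right]

theorem cube_subset_cube_of_mem {x y : Fin n → ℝ} {h : ℝ} (hy : y ∈ cube n x h) :
    cube n x h ⊆ cube n (fun i => y i - h) (2 * h) := fun z hz i =>
  ⟨by linarith [(hz i).1, (hy i).2], by linarith [(hz i).2, (hy i).1]⟩

theorem Convex.cube_lineMap_subset {Λ : Set (Fin n → ℝ)} (hΛ : Convex ℝ Λ) {a b : Fin n → ℝ}
    {h : ℝ} (ha : cube n a h ⊆ Λ) (hb : cube n b h ⊆ Λ) {s : ℝ} (hs : s ∈ Icc (0 : ℝ) 1) :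
    cube n (AffineMap.lineMap a b s) h ⊆ Λ := by
  intro z hz
  set p := AffineMap.lineMap a b s
  have hz0 : z - p ∈ cube n 0 h := by rwa [cube_eq_preimage_sub] at hz
  have hza : z - p + a ∈ cube n a h := by rw [cube_eq_preimage_sub]; simpa using hz0
  have hzb : z - p + b ∈ cube n b h := by rw [cube_eq_preimage_sub]; simpa using hz0
  convert hΛ.lineMap_mem (ha hza) (hb hzb) hs using 1
  simp only [p, AffineMap.lineMap_apply_module]
  module

theorem exists_cube_subset_measureReal_inter_mem_Icc {Λ E : Set (Fin n → ℝ)} (hΛ : Convex ℝ Λ)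
    (hE : MeasurableSet E) {a b : Fin n → ℝ} {h : ℝ} (ha : cube n a h ⊆ Λ) (hb : cube n b h ⊆ Λ)
    {L U : ℝ} (hLU : L ≤ U) (hLa : L ≤ volume.real (E ∩ cube n a h))
    (hUb : volume.real (E ∩ cube n b h) ≤ U) :
    ∃ x, cube n x h ⊆ Λ ∧ volume.real (E ∩ cube n x h) ∈ Icc L U := by
  set F : ℝ → ℝ := fun s => volume.real (E ∩ cube n (AffineMap.lineMap a b s) h)
  have hF : Continuous F := by
    have hcont := continuous_measureReal_inter_preimage_sub (μ := volume) hE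
      (measurableSet_cube 0 h) (by simp [volume_cube])
    simp only [← cube_eq_preimage_sub] at hcont
    exact hcont.comp AffineMap.lineMap_continuous
  by_cases haU : F 0 ≤ U
  · refine ⟨a, ha, hLa, ?_⟩
    simpa [F] using haU
  · have hU : U ∈ Icc (F 1) (F 0) := ⟨by simpa [F] using hUb, (not_le.1 haU).le⟩
    obtain ⟨s, hs, hFs⟩ := intermediate_value_Icc' zero_le_one hF.continuousOn hU
    exact ⟨_, hΛ.cube_lineMap_subset ha hb hs, show F s ∈ Icc L U from hFs.symm ▸ ⟨hLU, le_rfl⟩⟩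

end Cube

section Homothety

theorem Convex.image_homothety_subset_s4 {V : Type*} [AddCommGroup V] [Module ℝ V] {s : Set V}
    {c : V} (hs : Convex ℝ s) (hc : c ∈ s) {r : ℝ} (hr : r ∈ Icc (0 : ℝ) 1) :
    AffineMap.homothety c r '' s ⊆ s := by
  rintro _ ⟨x, hx, rfl⟩
  rw [AffineMap.homothety_eq_lineMap]
  exact hs.lineMap_mem hc hx hr

variable {V : Type*} [NormedAddCommGroup V] [NormedSpace ℝ V] [MeasurableSpace V] [BorelSpace V]
  [FiniteDimensional ℝ V] {s : Set V} {c : V}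

theorem Convex.measureReal_sdiff_image_homothety_le (μ : Measure V) [μ.IsAddHaarMeasure]
    (hs : Convex ℝ s) (hc : c ∈ s) (hsfin : μ s ≠ ∞) {t : ℝ} (ht0 : 0 ≤ t) (ht1 : t ≤ 1) :
    μ.real (s \ AffineMap.homothety c (1 - t) '' s) ≤ finrank ℝ V * t * μ.real s := by
  have hsub := hs.image_homothety_subset_s4 hc (r := 1 - t) ⟨by linarith, by linarith⟩
  have himage : μ.real (AffineMap.homothety c (1 - t) '' s) = (1 - t) ^ finrank ℝ V * μ.real s := by
    rw [measureReal_def, Measure.addHaar_image_homothety, ENNReal.toReal_mul,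
      ENNReal.toReal_ofReal (abs_nonneg _), abs_of_nonneg (pow_nonneg (by linarith) _)]
    rfl
  have hbernoulli := one_add_mul_sub_le_pow (by linarith : (-1 : ℝ) ≤ 1 - t) (finrank ℝ V)
  rw [measureReal_def, measure_sdiff hsub ((hs.affine_image _).nullMeasurableSet μ)
    (measure_ne_top_of_subset hsub hsfin), ENNReal.toReal_sub_of_le (measure_mono hsub) hsfin,
    ← measureReal_def, ← measureReal_def, himage]
  nlinarith [measureReal_nonneg (μ := μ) (s := s)]

end Homothety

def gridCube (n : ℕ) (h : ℝ) (k : Fin n → ℤ) : Set (Fin n → ℝ) := cube n (fun i => h * k i) h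

section Grid

variable {n : ℕ} {h : ℝ} {Λ : Set (Fin n → ℝ)}

theorem aedisjoint_gridCube (hh : 0 ≤ h) {k l : Fin n → ℤ} (hkl : k ≠ l) :
    AEDisjoint volume (gridCube n h k) (gridCube n h l) := by
  obtain ⟨i, hi⟩ := Function.ne_iff.1 hkl
  rw [AEDisjoint, gridCube, gridCube, cube_inter_cube, volume_pi_pi]
  refine Finset.prod_eq_zero (Finset.mem_univ i) ?_
  rw [Real.volume_Icc, ENNReal.ofReal_eq_zero]
  have hgap : (1 : ℝ) ≤ |(l i : ℝ) - k i| := by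
    exact_mod_cast Int.one_le_abs (sub_ne_zero.2 hi.symm)
  have hdist := max_sub_min_eq_abs (h * k i) (h * l i)
  rw [← mul_sub, abs_mul, abs_of_nonneg hh] at hdist
  nlinarith

theorem mem_gridCube_floor (hh : 0 < h) (y : Fin n → ℝ) :
    y ∈ gridCube n h (fun i => ⌊y i / h⌋) := fun i => by
  have hfloor := Int.floor_le (y i / h)
  have hceil := Int.lt_floor_add_one (y i / h)
  rw [le_div_iff₀ hh] at hfloor
  rw [div_lt_iff₀ hh] at hceil
  constructor <;> linarith

theorem finite_setOf_gridCube_subset (hh : 0 < h) (hΛ : IsBounded Λ) :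
    {k | gridCube n h k ⊆ Λ}.Finite := by
  obtain ⟨R, hR⟩ := isBounded_iff_forall_norm_le.1 hΛ
  refine (finite_Icc (fun _ => -⌈R / h⌉) fun _ => ⌈R / h⌉).subset fun k hk => ?_
  have hcorner := hR _ (hk fun i => ⟨le_rfl, by linarith⟩)
  have hk_le : ∀ i, |(k i : ℝ)| ≤ ⌈R / h⌉ := fun i => by
    refine le_trans ?_ (Int.le_ceil _)
    rw [le_div_iff₀ hh, ← abs_of_pos hh, ← abs_mul, mul_comm, ← Real.norm_eq_abs]
    exact (norm_le_pi_norm _ i).trans hcorner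
  refine ⟨fun i => ?_, fun i => ?_⟩
  · exact_mod_cast (abs_le.1 (hk_le i)).1
  · exact_mod_cast (abs_le.1 (hk_le i)).2

theorem Convex.cube_subset_of_unitCube_subset (hΛ : Convex ℝ Λ) (hunit : unitCube n ⊆ Λ)
    {w : Fin n → ℝ} (hw : w ∈ Λ) {t : ℝ} (ht0 : 0 < t) (ht1 : t ≤ 1) :
    cube n ((1 - t) • w) t ⊆ Λ := by
  intro z hz
  have hv : t⁻¹ • (z - (1 - t) • w) ∈ unitCube n := fun i => by
    have hzi := hz i
    simp only [Pi.smul_apply, smul_eq_mul, Pi.sub_apply] at hzi ⊢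
    constructor
    · exact mul_nonneg (inv_nonneg.2 ht0.le) (by linarith [hzi.1])
    · rw [inv_mul_le_iff₀ ht0]
      linarith [hzi.2]
  convert hΛ hw (hunit hv) (by linarith : 0 ≤ 1 - t) ht0.le (by ring) using 1
  rw [smul_smul, mul_inv_cancel₀ ht0.ne', one_smul, add_sub_cancel]

theorem exists_gridCube_subset_of_mem_image_homothety (hΛ : Convex ℝ Λ)
    (hunit : unitCube n ⊆ Λ) (hh : 0 < h) (hh1 : 2 * h ≤ 1) {y : Fin n → ℝ}
    (hy : y ∈ AffineMap.homothety (fun _ => (1 : ℝ) / 2) (1 - 2 * h) '' Λ) :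
    ∃ k, gridCube n h k ⊆ Λ ∧ y ∈ gridCube n h k := by
  obtain ⟨w, hw, rfl⟩ := hy
  refine ⟨_, (cube_subset_cube_of_mem (mem_gridCube_floor hh _)).trans ?_, mem_gridCube_floor hh _⟩
  have hcorner : (fun i => AffineMap.homothety (fun _ => (1 : ℝ) / 2) (1 - 2 * h) w i - h) =
      (1 - 2 * h) • w := by
    ext i
    simp only [one_div, AffineMap.homothety_apply, vsub_eq_sub, Pi.vadd_apply', Pi.smul_apply,
      Pi.sub_apply, smul_eq_mul, vadd_eq_add]
    ring
  rw [hcorner]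
  exact hΛ.cube_subset_of_unitCube_subset hunit hw (by positivity) hh1

theorem exists_finset_gridCube_subset (hΛ : Convex ℝ Λ) (hunit : unitCube n ⊆ Λ)
    (hΛb : IsBounded Λ) (hh : 0 < h) (hh1 : 2 * h ≤ 1) :
    ∃ T : Finset (Fin n → ℤ), (∀ k ∈ T, gridCube n h k ⊆ Λ) ∧
      (1 - 2 * n * h) * volume.real Λ ≤ volume.real (⋃ k ∈ T, gridCube n h k) := by
  have hfin := finite_setOf_gridCube_subset hh hΛb
  refine ⟨hfin.toFinset, fun k hk => hfin.mem_toFinset.1 hk, ?_⟩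
  set K := ⋃ k ∈ hfin.toFinset, gridCube n h k
  have hKΛ : K ⊆ Λ := iUnion₂_subset fun k hk => hfin.mem_toFinset.1 hk
  have hΛfin : volume Λ ≠ ∞ := hΛb.measure_lt_top.ne
  have hcover : AffineMap.homothety (fun _ => (1 : ℝ) / 2) (1 - 2 * h) '' Λ ⊆ K := fun y hy => by
    obtain ⟨k, hk, hyk⟩ := exists_gridCube_subset_of_mem_image_homothety hΛ hunit hh hh1 hy
    exact mem_biUnion (hfin.mem_toFinset.2 hk) hyk
  have hlayer : volume.real (Λ \ K) ≤ 2 * n * h * volume.real Λ := by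
    calc volume.real (Λ \ K)
        ≤ volume.real (Λ \ AffineMap.homothety (fun _ => (1 : ℝ) / 2) (1 - 2 * h) '' Λ) :=
          measureReal_mono (sdiff_subset_sdiff_right hcover)
            (measure_ne_top_of_subset sdiff_subset hΛfin)
      _ ≤ finrank ℝ (Fin n → ℝ) * (2 * h) * volume.real Λ :=
          hΛ.measureReal_sdiff_image_homothety_le volume (hunit fun _ => by norm_num) hΛfin
            (by positivity) hh1
      _ = 2 * n * h * volume.real Λ := by rw [finrank_fin_fun]; ring
  rw [measureReal_sdiff hKΛ (Finset.measurableSet_biUnion _ fun k _ => measurableSet_cube _ _)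
    hΛfin] at hlayer
  linarith

theorem measureReal_inter_biUnion_gridCube {E : Set (Fin n → ℝ)} (hE : NullMeasurableSet E)
    (hh : 0 ≤ h) (T : Finset (Fin n → ℤ)) :
    volume.real (E ∩ ⋃ k ∈ T, gridCube n h k) = ∑ k ∈ T, volume.real (E ∩ gridCube n h k) := by
  rw [inter_iUnion₂]
  exact measureReal_biUnion_finset₀
    (fun k _ l _ hkl => (aedisjoint_gridCube hh hkl).mono inter_subset_right inter_subset_right)
    (fun k _ => hE.inter (measurableSet_cube _ _).nullMeasurableSet)
    (fun k _ => measure_ne_top_of_subset inter_subset_right (by simp [gridCube, volume_cube]))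

theorem measureReal_biUnion_gridCube (hh : 0 ≤ h) (T : Finset (Fin n → ℤ)) :
    volume.real (⋃ k ∈ T, gridCube n h k) = ∑ _k ∈ T, h ^ n := by
  simpa [gridCube, measureReal_cube _ hh] using
    measureReal_inter_biUnion_gridCube nullMeasurableSet_univ hh T

theorem exists_gridCubes_subset_density_bounds {E : Set (Fin n → ℝ)} {α ε : ℝ}
    (hΛ : Convex ℝ Λ) (hunit : unitCube n ⊆ Λ) (hΛb : IsBounded Λ) (hE : MeasurableSet E)
    (hα0 : 0 ≤ α) (hα1 : α ≤ 1) (hε : ε < 1) (hdens : volume.real (E ∩ Λ) = α * volume.real Λ)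
    (hh : 0 < h) (hh1 : 2 * h ≤ 1) (hnh : 2 * n * h ≤ ε) :
    ∃ k₁ k₂, gridCube n h k₁ ⊆ Λ ∧ gridCube n h k₂ ⊆ Λ ∧
      (α - ε) / (1 - ε) * h ^ n ≤ volume.real (E ∩ gridCube n h k₁) ∧
      volume.real (E ∩ gridCube n h k₂) ≤ α / (1 - ε) * h ^ n := by
  have hΛfin : volume Λ ≠ ∞ := hΛb.measure_lt_top.ne
  have hΛ1 : 1 ≤ volume.real Λ := by
    simpa [measureReal_def, volume_unitCube] using measureReal_mono hunit hΛfin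
  obtain ⟨T, hTΛ, hTlarge⟩ := exists_finset_gridCube_subset hΛ hunit hΛb hh hh1
  set K := ⋃ k ∈ T, gridCube n h k
  have hKΛ : K ⊆ Λ := iUnion₂_subset hTΛ
  have hlarge : (1 - ε) * volume.real Λ ≤ volume.real K := le_trans (by nlinarith) hTlarge
  have hlow : (α - ε) / (1 - ε) * volume.real K ≤ volume.real (E ∩ K) :=
    mul_measureReal_le_measureReal_inter
      (Finset.measurableSet_biUnion _ fun k _ => measurableSet_cube _ _) hKΛ hΛfin hα1 hε hdens
      hlarge
  have hup : volume.real (E ∩ K) ≤ α / (1 - ε) * volume.real K :=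
    measureReal_inter_le_mul_measureReal hKΛ hΛfin hα0 hε hdens hlarge
  have hK : volume.real K = ∑ _k ∈ T, h ^ n := measureReal_biUnion_gridCube hh.le T
  have hKpos : 0 < volume.real K := by nlinarith
  have hTne : T.Nonempty := Finset.nonempty_of_sum_ne_zero (hK ▸ hKpos.ne')
  rw [hK, Finset.mul_sum, measureReal_inter_biUnion_gridCube hE.nullMeasurableSet hh.le] at hlow hup
  obtain ⟨k₁, hk₁, hL⟩ := Finset.exists_le_of_sum_le hTne hlow
  obtain ⟨k₂, hk₂, hU⟩ := Finset.exists_le_of_sum_le hTne hup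
  exact ⟨k₁, k₂, hTΛ k₁ hk₁, hTΛ k₂ hk₂, hL, hU⟩

end Grid

theorem exists_cube_of_intermediate_density_general (n : ℕ) :
    ∃ c C : ℝ, 0 < c ∧ 0 < C ∧
      ∀ (α ε : ℝ) (Λ E : Set (Fin n → ℝ)),
        α ∈ Set.Ioo (0 : ℝ) 1 → 0 < ε → ε < min α (1 - α) →
        Convex ℝ Λ → unitCube n ⊆ Λ →
        Λ ⊆ AffineMap.homothety (fun _ => (1 : ℝ) / 2) ((n : ℝ) ^ ((3 : ℝ) / 2)) '' unitCube n →
        MeasurableSet E → volume E < ⊤ →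
        (volume (E ∩ Λ)).toReal = α * (volume Λ).toReal →
        ∃ (x0 : Fin n → ℝ) (h : ℝ), 0 < h ∧ cube n x0 h ⊆ Λ ∧
          c * ε ^ n ≤ (volume (cube n x0 h)).toReal ∧
          (volume (cube n x0 h)).toReal ≤ C * ε ^ n ∧
          (α - ε) / (1 - ε) * (volume (cube n x0 h)).toReal ≤
            (volume (E ∩ cube n x0 h)).toReal ∧
          (volume (E ∩ cube n x0 h)).toReal ≤ α / (1 - ε) * (volume (cube n x0 h)).toReal := by
  refine ⟨(1 / (2 * (n + 1))) ^ n, (1 / (2 * (n + 1))) ^ n, by positivity, by positivity, ?_⟩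
  intro α ε Λ E ⟨hα0, hα1⟩ hε hεα hΛ hunit hbig hE _ hdens
  simp only [← measureReal_def] at hdens ⊢
  have hε1 : ε < 1 := by linarith [min_le_right α (1 - α)]
  set h := ε / (2 * (n + 1)) with h_def
  have hh : 0 < h := by positivity
  have hεh : 2 * h + 2 * n * h = ε := by
    rw [h_def]
    field_simp
    ring
  have hΛb : IsBounded Λ := ((unitCube_eq_Icc (n := n) ▸ isCompact_Icc).image
    (AffineMap.homothety_continuous _ _)).isBounded.subset hbig
  obtain ⟨k₁, k₂, hk₁, hk₂, hL, hU⟩ := exists_gridCubes_subset_density_bounds (ε := ε) hΛ hunit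
    hΛb hE hα0.le hα1.le hε1 hdens hh (by nlinarith) (by nlinarith)
  obtain ⟨x, hxΛ, hx⟩ := exists_cube_subset_measureReal_inter_mem_Icc hΛ hE hk₁ hk₂
    (by gcongr; linarith) hL hU
  have hvol : volume.real (cube n x h) = (1 / (2 * (n + 1))) ^ n * ε ^ n := by
    rw [measureReal_cube _ hh.le, ← mul_pow, h_def]
    ring
  refine ⟨x, h, hh, hxΛ, hvol.ge, hvol.le, ?_, ?_⟩ <;> rw [measureReal_cube _ hh.le]
  exacts [hx.1, hx.2]

/-- If `Λ` is convex with `[0,1]ⁿ ⊆ Λ ⊆ n^{3/2}[0,1]ⁿ`, `E` has finite measure with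
`|E ∩ Λ|/|Λ| = α`, and `0 < ε < min(α, 1-α)`, then there is a cube `R ⊆ Λ` with
`|R| ∼_n εⁿ` whose `E`-density lies between `(α-ε)/(1-ε)` and `α/(1-ε)`. -/
theorem exists_cube_of_intermediate_density (n : ℕ) (hn : 0 < n) :
    ∃ c C : ℝ, 0 < c ∧ 0 < C ∧
      ∀ (α ε : ℝ) (Λ E : Set (Fin n → ℝ)),
        α ∈ Set.Ioo (0 : ℝ) 1 → 0 < ε → ε < min α (1 - α) →
        Convex ℝ Λ → unitCube n ⊆ Λ →
        Λ ⊆ AffineMap.homothety (fun _ => (1 : ℝ) / 2) ((n : ℝ) ^ ((3 : ℝ) / 2)) '' unitCube n →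
        MeasurableSet E → volume E < ⊤ →
        (volume (E ∩ Λ)).toReal = α * (volume Λ).toReal →
        ∃ (x0 : Fin n → ℝ) (h : ℝ), 0 < h ∧ cube n x0 h ⊆ Λ ∧
          c * ε ^ n ≤ (volume (cube n x0 h)).toReal ∧
          (volume (cube n x0 h)).toReal ≤ C * ε ^ n ∧
          (α - ε) / (1 - ε) * (volume (cube n x0 h)).toReal ≤
            (volume (E ∩ cube n x0 h)).toReal ∧
          (volume (E ∩ cube n x0 h)).toReal ≤ α / (1 - ε) * (volume (cube n x0 h)).toReal :=
  exists_cube_of_intermediate_density_general n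
end

section
/- Let $B$ be the unit ball in $\mathbb{R}^n$, $\alpha \in (0,1)$, $0 < \epsilon < \min(\alpha, 1-\alpha)$, and let $E \subseteq \mathbb{R}^n$ be measurable with $|E \cap B|/|B| = \alpha$. Then there exists a cube $R \subseteq B$ with $|R| \sim_n \epsilon^n$ such that $\frac{\alpha - \epsilon}{1 - \epsilon} \le \frac{|E \cap R|}{|R|} \le \frac{\alpha}{1 - \epsilon}$. -/
/-!
Fix a cube `K` of side `h ≈ ε / n^(3/2)` and let `S` be the ball of radius `1 - h√n`, so that
`x + K ⊆ B` for `x ∈ S` and, by Bernoulli's inequality, `|S| = (1 - h√n)ⁿ |B| > (1 - ε) |B|`.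
By Fubini, `∫ |W ∩ (x + K)| dx = |K| |W|`; applied to `W = E ∩ B` and to `W = B \ E` this shows
that `g x = |E ∩ (x + K)|` can neither stay above `α / (1 - ε) · |K|` on all of `S` nor stay
below `(α - ε) / (1 - ε) · |K|` on all of `S`. As `g` is continuous and `S` is connected, `g`
takes a value in between.
-/

open MeasureTheory Set Metric

/-- The axes-parallel closed cube in Euclidean space with lower corner `x0` and sidelength `h`. -/
def cubeE (n : ℕ) (x0 : Fin n → ℝ) (h : ℝ) : Set (EuclideanSpace ℝ (Fin n)) :=
  {y | ∀ i, y i ∈ Set.Icc (x0 i) (x0 i + h)}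

open Filter Topology
open scoped Pointwise ENNReal

theorem mem_vadd_set_iff_sub_mem {G : Type*} [AddCommGroup G] {K : Set G} {x y : G} :
    y ∈ x +ᵥ K ↔ y - x ∈ K := by
  rw [mem_vadd_set_iff_neg_vadd_mem, vadd_eq_add, neg_add_eq_sub]

theorem IsPreconnected.exists_mem_Icc_of_le_of_ge {X α : Type*} [TopologicalSpace X]
    [LinearOrder α] [TopologicalSpace α] [OrderClosedTopology α] {S : Set X}
    (hS : IsPreconnected S) {f : X → α} (hf : ContinuousOn f S) {a b : α} (hab : a ≤ b)
    {x y : X} (hx : x ∈ S) (hy : y ∈ S) (hfx : f x ≤ b) (hfy : a ≤ f y) :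
    ∃ z ∈ S, f z ∈ Icc a b := by
  by_cases hxa : a ≤ f x
  · exact ⟨x, hx, hxa, hfx⟩
  by_cases hyb : f y ≤ b
  · exact ⟨y, hy, hfy, hyb⟩
  obtain ⟨z, hz, hza⟩ := hS.intermediate_value hx hy hf
    ⟨(not_le.1 hxa).le, hab.trans (not_le.1 hyb).le⟩
  exact ⟨z, hz, hza.symm ▸ ⟨le_rfl, hab⟩⟩

theorem one_sub_lt_one_sub_div_pow {ε : ℝ} (hε : 0 < ε) (hε₄ : ε ≤ 4) {n : ℕ}
    (hn : 0 < n) :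
    1 - ε < (1 - ε / (2 * n)) ^ n := by
  have hn' : (1 : ℝ) ≤ n := Nat.one_le_cast.2 hn
  have hbern := one_add_mul_le_pow (a := -(ε / (2 * n)))
    (by rw [neg_le_neg_iff, div_le_iff₀ (by linarith)]; linarith) n
  have hhalf : (n : ℝ) * -(ε / (2 * n)) = -(ε / 2) := by field_simp
  calc 1 - ε < 1 + n * -(ε / (2 * n)) := by rw [hhalf]; linarith
    _ ≤ (1 - ε / (2 * n)) ^ n := by rwa [← sub_eq_add_neg] at hbern

theorem toReal_measure_sdiff_eq_one_sub_mul {X : Type*} [MeasurableSpace X] {μ : Measure X}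
    {B E : Set X} {p : ℝ} (hE : MeasurableSet E) (hB : μ B ≠ ∞)
    (h : (μ (E ∩ B)).toReal = p * (μ B).toReal) :
    (μ (B \ E)).toReal = (1 - p) * (μ B).toReal := by
  have hsplit := measureReal_inter_add_sdiff (s := B) hE hB
  rw [inter_comm, measureReal_def, measureReal_def, measureReal_def] at hsplit
  linarith

section Averaging

variable {G : Type*} [MeasurableSpace G] [AddCommGroup G] [MeasurableAdd₂ G] {μ : Measure G}
  {K W S : Set G}

theorem measure_inter_vadd_eq_lintegral (hW : MeasurableSet W) (hK : MeasurableSet K) (x : G) :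
    μ (W ∩ (x +ᵥ K)) = ∫⁻ y, W.indicator 1 y * K.indicator 1 (y - x) ∂μ := by
  rw [← lintegral_indicator_one (hW.inter (hK.const_vadd x)), inter_indicator_one]
  congr with y
  rw [Pi.mul_apply]
  congr 1
  by_cases hy : y ∈ x +ᵥ K
  · rw [indicator_of_mem hy, indicator_of_mem (mem_vadd_set_iff_sub_mem.1 hy)]; rfl
  · rw [indicator_of_notMem hy, indicator_of_notMem (mt mem_vadd_set_iff_sub_mem.2 hy)]

variable [MeasurableNeg G] [SFinite μ]

theorem measurable_measure_inter_vadd (hW : MeasurableSet W) (hK : MeasurableSet K) :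
    Measurable fun x : G => μ (W ∩ (x +ᵥ K)) := by
  simp_rw [measure_inter_vadd_eq_lintegral hW hK]
  have : Measurable fun p : G × G =>
      W.indicator (1 : G → ℝ≥0∞) p.2 * K.indicator 1 (p.2 - p.1) := by
    fun_prop (disch := assumption)
  exact this.lintegral_prod_right'

variable [μ.IsAddLeftInvariant] [μ.IsNegInvariant]

theorem lintegral_measure_inter_vadd (hW : MeasurableSet W) (hK : MeasurableSet K) :
    ∫⁻ x, μ (W ∩ (x +ᵥ K)) ∂μ = μ K * μ W := by
  have hW₁ : Measurable (W.indicator (1 : G → ℝ≥0∞)) := measurable_one.indicator hW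
  have hK₁ : Measurable (K.indicator (1 : G → ℝ≥0∞)) := measurable_one.indicator hK
  have hslice (y : G) :
      ∫⁻ x, W.indicator 1 y * K.indicator 1 (y - x) ∂μ = W.indicator 1 y * μ K := by
    rw [lintegral_const_mul _ (by fun_prop), lintegral_sub_left_eq_self (K.indicator 1) y,
      lintegral_indicator_one hK]
  simp_rw [measure_inter_vadd_eq_lintegral hW hK]
  rw [lintegral_lintegral_swap (by fun_prop), lintegral_congr hslice,
    lintegral_mul_const _ hW₁, lintegral_indicator_one hW, mul_comm]

theorem exists_mem_measure_inter_vadd_lt (hW : MeasurableSet W) (hK : MeasurableSet K)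
    (hK₀ : μ K ≠ 0) (hK_top : μ K ≠ ∞) {t : ℝ≥0∞} (h : μ W < t * μ S) :
    ∃ x ∈ S, μ (W ∩ (x +ᵥ K)) < t * μ K := by
  by_contra! hge
  refine h.not_ge ((ENNReal.mul_le_mul_iff_right hK₀ hK_top).1 ?_)
  calc μ K * (t * μ S) = ∫⁻ _ in S, t * μ K ∂μ := by rw [setLIntegral_const]; ring
    _ ≤ ∫⁻ x in S, μ (W ∩ (x +ᵥ K)) ∂μ :=
      setLIntegral_mono (measurable_measure_inter_vadd hW hK) hge
    _ ≤ ∫⁻ x, μ (W ∩ (x +ᵥ K)) ∂μ := setLIntegral_le_lintegral _ _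
    _ = μ K * μ W := lintegral_measure_inter_vadd hW hK

theorem exists_mem_toReal_measure_inter_vadd_lt (hW : MeasurableSet W) (hK : MeasurableSet K)
    (hK₀ : μ K ≠ 0) (hK_top : μ K ≠ ∞) (hW_top : μ W ≠ ∞) {t : ℝ}
    (h : (μ W).toReal < t * (μ S).toReal) :
    ∃ x ∈ S, (μ (W ∩ (x +ᵥ K))).toReal < t * (μ K).toReal := by
  have ht : 0 ≤ t := by
    by_contra! ht
    nlinarith [ENNReal.toReal_nonneg (a := μ W), ENNReal.toReal_nonneg (a := μ S)]
  obtain ⟨x, hxS, hx⟩ := exists_mem_measure_inter_vadd_lt hW hK hK₀ hK_top (t := .ofReal t) <|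
    calc μ W < ENNReal.ofReal (t * (μ S).toReal) := (ENNReal.lt_ofReal_iff_toReal_lt hW_top).2 h
      _ ≤ ENNReal.ofReal t * μ S := by
        rw [ENNReal.ofReal_mul ht]; gcongr; exact ENNReal.ofReal_toReal_le
  refine ⟨x, hxS, ENNReal.toReal_lt_of_lt_ofReal ?_⟩
  rwa [ENNReal.ofReal_mul ht, ENNReal.ofReal_toReal hK_top]

end Averaging

section Continuity

variable {G : Type*} [MeasurableSpace G] [AddGroup G] {μ : Measure G} [μ.IsAddLeftInvariant]
  {K : Set G}

theorem measure_inter_vadd_le (E : Set G) (x y : G) :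
    μ (E ∩ (x +ᵥ K)) ≤ μ (E ∩ (y +ᵥ K)) + μ (((-y + x) +ᵥ K) \ K) := by
  have hsplit : E ∩ (x +ᵥ K) ⊆ E ∩ (y +ᵥ K) ∪ (x +ᵥ K) \ (y +ᵥ K) := fun z hz => by
    by_cases hzy : z ∈ y +ᵥ K
    · exact Or.inl ⟨hz.1, hzy⟩
    · exact Or.inr ⟨hz.2, hzy⟩
  have htranslate : (x +ᵥ K) \ (y +ᵥ K) = y +ᵥ (((-y + x) +ᵥ K) \ K) := by
    rw [vadd_set_sdiff, vadd_vadd, add_neg_cancel_left]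
  calc μ (E ∩ (x +ᵥ K))
      ≤ μ (E ∩ (y +ᵥ K) ∪ (x +ᵥ K) \ (y +ᵥ K)) := measure_mono hsplit
    _ ≤ _ := measure_union_le _ _
    _ = _ := by rw [htranslate, measure_vadd]

variable [TopologicalSpace G] [IsTopologicalAddGroup G] [LocallyCompactSpace G] [BorelSpace G]
  [IsFiniteMeasureOnCompacts μ] [μ.InnerRegularCompactLTTop]

theorem continuous_toReal_measure_inter_vadd (hK : IsCompact K) (hK' : IsClosed K) (E : Set G) :
    Continuous fun x : G => (μ (E ∩ (x +ᵥ K))).toReal := by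
  have hfin (x : G) {s : Set G} (hs : s ⊆ x +ᵥ K) : μ s ≠ ∞ :=
    ne_top_of_le_ne_top (by rw [measure_vadd]; exact hK.measure_lt_top.ne) (measure_mono hs)
  set d : G → ℝ := fun v => (μ ((v +ᵥ K) \ K)).toReal
  have hd : Tendsto d (𝓝 0) (𝓝 0) :=
    (ENNReal.tendsto_toReal ENNReal.zero_ne_top).comp
      (tendsto_measure_vadd_sdiff_isCompact_isClosed hK hK')
  have hd₀ (v : G) : 0 ≤ d v := ENNReal.toReal_nonneg
  have hle (x y : G) :
      (μ (E ∩ (x +ᵥ K))).toReal ≤ (μ (E ∩ (y +ᵥ K))).toReal + d (-y + x) :=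
    ENNReal.toReal_le_add (measure_inter_vadd_le E x y) (hfin y inter_subset_right)
      (hfin _ sdiff_subset)
  refine continuous_iff_continuousAt.2 fun y => tendsto_iff_dist_tendsto_zero.2 ?_
  refine squeeze_zero (fun _ => dist_nonneg) (g := fun x => d (-y + x) + d (-x + y))
    (fun x => ?_) ?_
  · rw [Real.dist_eq, abs_sub_le_iff]
    constructor <;> linarith [hle x y, hle y x, hd₀ (-y + x), hd₀ (-x + y)]
  · have hy : Tendsto (fun x => -y + x) (𝓝 y) (𝓝 0) :=
      (by fun_prop : Continuous _).tendsto' _ _ (by simp)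
    have hy' : Tendsto (fun x => -x + y) (𝓝 y) (𝓝 0) :=
      (by fun_prop : Continuous _).tendsto' _ _ (by simp)
    simpa using (hd.comp hy).add (hd.comp hy')

end Continuity

theorem exists_mem_toReal_measure_inter_vadd_mem_Icc {G : Type*} [MeasurableSpace G]
    [AddCommGroup G] [TopologicalSpace G] [IsTopologicalAddGroup G] [LocallyCompactSpace G]
    [BorelSpace G] [MeasurableAdd₂ G] {μ : Measure G} [SFinite μ] [μ.IsAddLeftInvariant]
    [μ.IsNegInvariant] [IsFiniteMeasureOnCompacts μ] [μ.InnerRegularCompactLTTop]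
    {K E B S : Set G} (hK : IsCompact K) (hK' : IsClosed K) (hK₀ : μ K ≠ 0)
    (hE : MeasurableSet E) (hB : MeasurableSet B) (hB_top : μ B ≠ ∞) (hS : IsPreconnected S)
    (hSB : ∀ x ∈ S, x +ᵥ K ⊆ B) {a b : ℝ} (hab : a ≤ b)
    (hb : (μ (E ∩ B)).toReal < b * (μ S).toReal)
    (ha : (μ (B \ E)).toReal < (1 - a) * (μ S).toReal) :
    ∃ x ∈ S,
      (μ (E ∩ (x +ᵥ K))).toReal ∈ Icc (a * (μ K).toReal) (b * (μ K).toReal) := by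
  have hK_top : μ K ≠ ∞ := hK.measure_lt_top.ne
  obtain ⟨x, hxS, hx⟩ := exists_mem_toReal_measure_inter_vadd_lt (hE.inter hB)
    hK'.measurableSet hK₀ hK_top (measure_ne_top_of_subset inter_subset_right hB_top) hb
  obtain ⟨y, hyS, hy⟩ := exists_mem_toReal_measure_inter_vadd_lt (hB.diff hE)
    hK'.measurableSet hK₀ hK_top (measure_ne_top_of_subset sdiff_subset hB_top) ha
  rw [inter_assoc, inter_eq_right.2 (hSB x hxS)] at hx
  have hsplit :
      (μ (E ∩ (y +ᵥ K))).toReal + (μ ((B \ E) ∩ (y +ᵥ K))).toReal = (μ K).toReal := by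
    have hyK_top : μ (y +ᵥ K) ≠ ∞ := by rwa [measure_vadd]
    rw [sdiff_inter_right_comm, inter_eq_right.2 (hSB y hyS), inter_comm E,
      ← ENNReal.toReal_add (measure_ne_top_of_subset inter_subset_left hyK_top)
        (measure_ne_top_of_subset sdiff_subset hyK_top), measure_inter_add_sdiff _ hE,
      measure_vadd]
  refine hS.exists_mem_Icc_of_le_of_ge
    (continuous_toReal_measure_inter_vadd hK hK' E).continuousOn
    (mul_le_mul_of_nonneg_right hab ENNReal.toReal_nonneg) hxS hyS hx.le ?_
  linarith

section Cube

variable {n : ℕ} {h : ℝ}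

theorem cubeE_eq_preimage_Icc (x₀ : Fin n → ℝ) (h : ℝ) :
    cubeE n x₀ h = WithLp.ofLp ⁻¹' Icc x₀ (x₀ + Function.const _ h) := by
  ext y
  simp [cubeE, Pi.le_def, forall_and]

theorem volume_cubeE (x₀ : Fin n → ℝ) (hh : 0 ≤ h) :
    volume (cubeE n x₀ h) = ENNReal.ofReal (h ^ n) := by
  rw [cubeE_eq_preimage_Icc, (PiLp.volume_preserving_ofLp _).measure_preimage
    measurableSet_Icc.nullMeasurableSet, Real.volume_Icc_pi]
  simp [ENNReal.ofReal_pow hh]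

theorem isCompact_cubeE (x₀ : Fin n → ℝ) (h : ℝ) : IsCompact (cubeE n x₀ h) := by
  rw [cubeE_eq_preimage_Icc]
  exact (PiLp.homeomorph 2 _).isCompact_preimage.2 isCompact_Icc

theorem isClosed_cubeE (x₀ : Fin n → ℝ) (h : ℝ) : IsClosed (cubeE n x₀ h) := by
  rw [cubeE_eq_preimage_Icc]
  exact isClosed_Icc.preimage (PiLp.continuous_ofLp 2 _)

theorem cubeE_eq_vadd (x : EuclideanSpace ℝ (Fin n)) (h : ℝ) :
    cubeE n x.ofLp h = x +ᵥ cubeE n 0 h := by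
  ext y
  simp only [mem_vadd_set_iff_sub_mem, cubeE, mem_ofPred_eq, mem_Icc, WithLp.ofLp_sub,
    Pi.sub_apply, Pi.zero_apply, zero_add, sub_nonneg, sub_le_iff_le_add']

theorem norm_le_of_mem_cubeE_zero (hh : 0 ≤ h) {v : EuclideanSpace ℝ (Fin n)}
    (hv : v ∈ cubeE n 0 h) : ‖v‖ ≤ h * √n := by
  have hcoord (i : Fin n) : ‖v i‖ ^ 2 ≤ h ^ 2 := by
    obtain ⟨h₀, h₁⟩ := hv i
    simp only [Pi.zero_apply, zero_add] at h₀ h₁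
    rw [Real.norm_eq_abs, sq_abs]
    nlinarith
  calc ‖v‖ = √(∑ i, ‖v i‖ ^ 2) := EuclideanSpace.norm_eq v
    _ ≤ √(∑ _ : Fin n, h ^ 2) := Real.sqrt_le_sqrt (Finset.sum_le_sum fun i _ => hcoord i)
    _ = h * √n := by simp [Real.sqrt_sq hh, mul_comm]

theorem vadd_cubeE_zero_subset_ball (hh : 0 ≤ h) {c x : EuclideanSpace ℝ (Fin n)} {r : ℝ}
    (hx : x ∈ ball c (r - h * √n)) : x +ᵥ cubeE n 0 h ⊆ ball c r := by
  rintro _ ⟨v, hv, rfl⟩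
  rw [mem_ball] at hx ⊢
  calc dist (x + v) c ≤ dist (x + v) x + dist x c := dist_triangle _ _ _
    _ < r := by rw [dist_self_add_left]; linarith [norm_le_of_mem_cubeE_zero hh hv]

theorem exists_cubeE_subset_ball_toReal_volume_inter_mem_Icc (hh : 0 < h)
    {c : EuclideanSpace ℝ (Fin n)} {r : ℝ} {E : Set (EuclideanSpace ℝ (Fin n))}
    (hE : MeasurableSet E) {a b : ℝ} (hab : a ≤ b)
    (hb : (volume (E ∩ ball c r)).toReal < b * (volume (ball c (r - h * √n))).toReal)
    (ha : (volume (ball c r \ E)).toReal < (1 - a) * (volume (ball c (r - h * √n))).toReal) :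
    ∃ x₀ : Fin n → ℝ, cubeE n x₀ h ⊆ ball c r ∧
      (volume (E ∩ cubeE n x₀ h)).toReal ∈ Icc (a * h ^ n) (b * h ^ n) := by
  have hK : (volume (cubeE n 0 h)).toReal = h ^ n := by
    rw [volume_cubeE 0 hh.le, ENNReal.toReal_ofReal (by positivity)]
  have hK₀ : volume (cubeE n 0 h) ≠ 0 := by
    rw [volume_cubeE 0 hh.le]; exact (ENNReal.ofReal_pos.2 (by positivity)).ne'
  obtain ⟨x, hxS, hx⟩ := exists_mem_toReal_measure_inter_vadd_mem_Icc (isCompact_cubeE 0 h)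
    (isClosed_cubeE 0 h) hK₀ hE measurableSet_ball measure_ball_lt_top.ne
    (convex_ball c _).isPreconnected (fun _ => vadd_cubeE_zero_subset_ball hh.le) hab hb ha
  rw [hK] at hx
  exact ⟨x.ofLp, cubeE_eq_vadd x h ▸ vadd_cubeE_zero_subset_ball hh.le hxS,
    cubeE_eq_vadd x h ▸ hx⟩

theorem toReal_volume_ball (c : EuclideanSpace ℝ (Fin n)) {r : ℝ} (hr : 0 < r) :
    (volume (ball c r)).toReal =
      r ^ n * (volume (ball (0 : EuclideanSpace ℝ (Fin n)) 1)).toReal := by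
  rw [Measure.addHaar_ball_of_pos _ _ hr, finrank_euclideanSpace_fin, ENNReal.toReal_mul,
    ENNReal.toReal_ofReal (by positivity)]

theorem exists_cubeE_subset_ball_density_mem_Icc (c : EuclideanSpace ℝ (Fin n)) {r α ε : ℝ}
    (hh : 0 < h) (hhr : h * √n < r) (hθ : (1 - ε) * r ^ n < (r - h * √n) ^ n)
    (hα : α ∈ Ioo 0 1) (hε₁ : ε < 1) {E : Set (EuclideanSpace ℝ (Fin n))}
    (hE : MeasurableSet E)
    (hvol : (volume (E ∩ ball c r)).toReal = α * (volume (ball c r)).toReal) :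
    ∃ x₀ : Fin n → ℝ, cubeE n x₀ h ⊆ ball c r ∧
      (volume (E ∩ cubeE n x₀ h)).toReal ∈
        Icc ((α - ε) / (1 - ε) * h ^ n) (α / (1 - ε) * h ^ n) := by
  obtain ⟨hα₀, hα₁⟩ := hα
  have hε₁' : 0 < 1 - ε := by linarith
  have hδ : 0 ≤ h * √n := by positivity
  have hr : 0 < r := hδ.trans_lt hhr
  have hε : 0 ≤ ε := by
    nlinarith [pow_pos hr n, pow_le_pow_left₀ (sub_pos.2 hhr).le (sub_le_self r hδ) n]
  have hU : 0 < (volume (ball (0 : EuclideanSpace ℝ (Fin n)) 1)).toReal :=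
    ENNReal.toReal_pos (measure_ball_pos _ _ one_pos).ne' measure_ball_lt_top.ne
  have hgain (p : ℝ) (hp : 0 < p) :
      p * (volume (ball c r)).toReal < p / (1 - ε) * (volume (ball c (r - h * √n))).toReal := by
    rw [toReal_volume_ball c hr, toReal_volume_ball c (sub_pos.2 hhr), div_mul_eq_mul_div,
      lt_div_iff₀ hε₁']
    nlinarith [mul_pos hp hU]
  refine exists_cubeE_subset_ball_toReal_volume_inter_mem_Icc hh hE (by gcongr; linarith)
    (by rw [hvol]; exact hgain α hα₀) ?_
  rw [toReal_measure_sdiff_eq_one_sub_mul hE measure_ball_lt_top.ne hvol,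
    show 1 - (α - ε) / (1 - ε) = (1 - α) / (1 - ε) by field_simp; ring]
  exact hgain (1 - α) (by linarith)

end Cube

/-- If `B` is the unit ball in `ℝⁿ`, `E` is measurable with `|E ∩ B|/|B| = α ∈ (0,1)`, and
`0 < ε < min(α, 1-α)`, then there is a cube `R ⊆ B` with `|R| ∼_n εⁿ` whose `E`-density lies
between `(α-ε)/(1-ε)` and `α/(1-ε)`. -/
theorem exists_cube_of_intermediate_density_ball (n : ℕ) (hn : 0 < n) :
    ∃ c C : ℝ, 0 < c ∧ 0 < C ∧
      ∀ (α ε : ℝ) (E : Set (EuclideanSpace ℝ (Fin n))),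
        α ∈ Set.Ioo (0 : ℝ) 1 → 0 < ε → ε < min α (1 - α) →
        MeasurableSet E →
        (volume (E ∩ Metric.ball (0 : EuclideanSpace ℝ (Fin n)) 1)).toReal =
          α * (volume (Metric.ball (0 : EuclideanSpace ℝ (Fin n)) 1)).toReal →
        ∃ (x0 : Fin n → ℝ) (h : ℝ), 0 < h ∧
          cubeE n x0 h ⊆ Metric.ball (0 : EuclideanSpace ℝ (Fin n)) 1 ∧
          c * ε ^ n ≤ (volume (cubeE n x0 h)).toReal ∧
          (volume (cubeE n x0 h)).toReal ≤ C * ε ^ n ∧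
          (α - ε) / (1 - ε) * (volume (cubeE n x0 h)).toReal ≤
            (volume (E ∩ cubeE n x0 h)).toReal ∧
          (volume (E ∩ cubeE n x0 h)).toReal ≤
            α / (1 - ε) * (volume (cubeE n x0 h)).toReal := by
  have hn' : (1 : ℝ) ≤ n := Nat.one_le_cast.2 hn
  set s : ℝ := 2 * n * √n
  refine ⟨(1 / s) ^ n, (1 / s) ^ n, by positivity, by positivity, ?_⟩
  rintro α ε E hα hε hεα hE hvol
  have hε₁ : ε < 1 := by linarith [(lt_min_iff.1 hεα).2, hα.1]
  set h := ε / s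
  have hh : 0 < h := by positivity
  have hhδ : h * √n = ε / (2 * n) := by
    have : 0 < √n := by positivity
    simp only [h, s]; field_simp
  obtain ⟨x₀, hsub, hlo, hhi⟩ := exists_cubeE_subset_ball_density_mem_Icc 0 hh
    (by rw [hhδ, div_lt_one (by positivity)]; linarith)
    (by rw [hhδ, one_pow, mul_one]; exact one_sub_lt_one_sub_div_pow hε (by linarith) hn)
    hα hε₁ hE hvol
  have hcube : (volume (cubeE n x₀ h)).toReal = h ^ n := by
    rw [volume_cubeE x₀ hh.le, ENNReal.toReal_ofReal (by positivity)]
  have hhn : h ^ n = (1 / s) ^ n * ε ^ n := by rw [← mul_pow, one_div_mul_eq_div]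
  exact ⟨x₀, h, hh, hsub, (hcube.trans hhn).ge, (hcube.trans hhn).le, hcube ▸ hlo,
    hcube ▸ hhi⟩
end

section
/- Let $f : (0,1) \to [1,\infty)$ be a continuous non-increasing function, $p \in (0,1)$, and suppose there exist $\alpha_0 \in (0,1)$, $A > 0$, and $c > 0$ such that: (a) $f(\alpha) - 1 \le A(1-\alpha)^p$ for all $\alpha \in (\alpha_0, 1)$; and (b) $f(x) \le f\big(x(1 + c\delta)\big) f(1-\delta)$ for all $x \in (0,1)$ and $\delta \in (0, 1-x)$ with $x(1+c\delta) < 1$. Then $f$ is locally Hölder continuous with exponent $p$ on $(0,1)$: for every compact $K \subset (0,1)$ there is a constant $C_K$ with $|f(x) - f(y)| \le C_K |x-y|^p$ for all $x, y \in K$. -/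
/-!
For `x < y` in `[a, b] ⊂ (0, 1)` write `y = x (1 + c δ)` with `δ = (y - x) / (c x)`, which is
comparable to `y - x`. Submultiplicativity followed by the Solyanik estimate gives
`f x ≤ f y · f (1 - δ) ≤ f y (1 + A δ ^ p)`, so `f x - f y ≤ f a · A δ ^ p` as soon as the gap is
small enough for both estimates to apply. Larger gaps are handled by the trivial bound
`f x - f y ≤ f a`, and monotonicity turns the one-sided bound into a bound on `|f x - f y|`.
-/

open Set

lemma abs_sub_le_of_antitoneOn {f : ℝ → ℝ} {s : Set ℝ} {p C : ℝ} (hp : 0 < p)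
    (hf : AntitoneOn f s) (h : ∀ x ∈ s, ∀ y ∈ s, x < y → f x - f y ≤ C * (y - x) ^ p) :
    ∀ x ∈ s, ∀ y ∈ s, |f x - f y| ≤ C * |x - y| ^ p := by
  intro x hx y hy
  rcases lt_trichotomy x y with hxy | rfl | hyx
  · rw [abs_of_nonneg (sub_nonneg.2 (hf hx hy hxy.le)), abs_sub_comm,
      abs_of_pos (sub_pos.2 hxy)]
    exact h x hx y hy hxy
  · simp [Real.zero_rpow hp.ne']
  · rw [abs_sub_comm, abs_of_nonneg (sub_nonneg.2 (hf hy hx hyx.le)),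
      abs_of_pos (sub_pos.2 hyx)]
    exact h y hy x hx hyx

section Solyanik

variable {f : ℝ → ℝ} {p α₀ A c : ℝ}

lemma sub_le_of_submul_of_solyanik (hc : 0 < c) (hone : ∀ x ∈ Ioo (0 : ℝ) 1, 1 ≤ f x)
    (hsol : ∀ α ∈ Ioo α₀ 1, f α - 1 ≤ A * (1 - α) ^ p)
    (hsub : ∀ x ∈ Ioo (0 : ℝ) 1, ∀ δ : ℝ, 0 < δ → δ < 1 - x → x * (1 + c * δ) < 1 →
      f x ≤ f (x * (1 + c * δ)) * f (1 - δ))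
    {x δ : ℝ} (hx : x ∈ Ioo (0 : ℝ) 1) (hδ : 0 < δ) (hδx : δ < 1 - x) (hδα₀ : δ < 1 - α₀)
    (hy : x * (1 + c * δ) < 1) :
    f x - f (x * (1 + c * δ)) ≤ f (x * (1 + c * δ)) * (A * δ ^ p) := by
  have hy₀ : 0 < x * (1 + c * δ) := by have := hx.1; positivity
  have hfy : 0 ≤ f (x * (1 + c * δ)) := zero_le_one.trans (hone _ ⟨hy₀, hy⟩)
  have hfδ : f (1 - δ) ≤ 1 + A * δ ^ p := by
    have := hsol (1 - δ) ⟨by linarith, by linarith⟩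
    rw [sub_sub_cancel] at this
    linarith
  have := hsub x hx δ hδ hδx hy
  nlinarith [mul_le_mul_of_nonneg_left hfδ hfy]

lemma sub_le_of_gap_lt (hp : 0 ≤ p) (hA : 0 ≤ A) (hc : 0 < c)
    (hmono : AntitoneOn f (Ioo 0 1)) (hone : ∀ x ∈ Ioo (0 : ℝ) 1, 1 ≤ f x)
    (hsol : ∀ α ∈ Ioo α₀ 1, f α - 1 ≤ A * (1 - α) ^ p)
    (hsub : ∀ x ∈ Ioo (0 : ℝ) 1, ∀ δ : ℝ, 0 < δ → δ < 1 - x → x * (1 + c * δ) < 1 →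
      f x ≤ f (x * (1 + c * δ)) * f (1 - δ))
    {a b x y : ℝ} (ha : 0 < a) (hb : b < 1) (hx : x ∈ Icc a b) (hy : y ∈ Icc a b)
    (hxy : x < y) (hgap : y - x < c * a * min (1 - b) (1 - α₀)) :
    f x - f y ≤ f a * A * ((y - x) / (c * a)) ^ p := by
  have hIoo : Icc a b ⊆ Ioo 0 1 := Icc_subset_Ioo ha hb
  have hx₀ : 0 < x := ha.trans_le hx.1
  set δ := (y - x) / (c * x)
  have hδ : 0 < δ := div_pos (sub_pos.2 hxy) (by positivity)
  have hδca : δ ≤ (y - x) / (c * a) :=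
    div_le_div_of_nonneg_left (sub_pos.2 hxy).le (by positivity) (by gcongr; exact hx.1)
  have hδm : δ < min (1 - b) (1 - α₀) :=
    hδca.trans_lt <| (div_lt_iff₀ (by positivity)).2 (by linarith)
  have hyδ : x * (1 + c * δ) = y := by
    simp only [δ]
    field_simp
    ring
  have key := sub_le_of_submul_of_solyanik hc hone hsol hsub (hIoo hx) hδ
    (by linarith [min_le_left (1 - b) (1 - α₀), hy.2])
    (hδm.trans_le (min_le_right _ _)) (hyδ ▸ (hIoo hy).2)
  rw [hyδ] at key
  have hfy : f y ≤ f a := hmono (hIoo ⟨le_rfl, hx.1.trans hx.2⟩) (hIoo hy) hy.1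
  calc f x - f y ≤ f y * (A * δ ^ p) := key
    _ ≤ f a * (A * ((y - x) / (c * a)) ^ p) := by
      gcongr
      linarith [hone y (hIoo hy)]
    _ = f a * A * ((y - x) / (c * a)) ^ p := (mul_assoc _ _ _).symm

lemma exists_holder_on_Icc (hp : 0 < p) (hα₀ : α₀ < 1) (hA : 0 ≤ A) (hc : 0 < c)
    (hmono : AntitoneOn f (Ioo 0 1)) (hone : ∀ x ∈ Ioo (0 : ℝ) 1, 1 ≤ f x)
    (hsol : ∀ α ∈ Ioo α₀ 1, f α - 1 ≤ A * (1 - α) ^ p)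
    (hsub : ∀ x ∈ Ioo (0 : ℝ) 1, ∀ δ : ℝ, 0 < δ → δ < 1 - x → x * (1 + c * δ) < 1 →
      f x ≤ f (x * (1 + c * δ)) * f (1 - δ))
    {a b : ℝ} (ha : 0 < a) (hb : b < 1) :
    ∃ C : ℝ, ∀ x ∈ Icc a b, ∀ y ∈ Icc a b, |f x - f y| ≤ C * |x - y| ^ p := by
  set ε := c * a * min (1 - b) (1 - α₀)
  refine ⟨f a * (A + 1) / ε ^ p, abs_sub_le_of_antitoneOn hp
    (hmono.mono (Icc_subset_Ioo ha hb)) fun x hx y hy hxy => ?_⟩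
  have hab : a ≤ b := hx.1.trans hx.2
  have hIoo : Icc a b ⊆ Ioo 0 1 := Icc_subset_Ioo ha hb
  have hfa : 1 ≤ f a := hone a (hIoo ⟨le_rfl, hab⟩)
  have hε : 0 < ε := mul_pos (by positivity) (lt_min (by linarith) (by linarith))
  have hεca : ε ≤ c * a :=
    mul_le_of_le_one_right (by positivity) ((min_le_left _ _).trans (by linarith))
  rw [div_mul_eq_mul_div, mul_div_assoc, ← Real.div_rpow (sub_pos.2 hxy).le hε.le]
  rcases lt_or_ge (y - x) ε with hsmall | hlarge
  · have hpow : ((y - x) / (c * a)) ^ p ≤ ((y - x) / ε) ^ p := by gcongr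
    calc f x - f y ≤ f a * A * ((y - x) / (c * a)) ^ p :=
          sub_le_of_gap_lt hp.le hA hc hmono hone hsol hsub ha hb hx hy hxy hsmall
      _ ≤ f a * (A + 1) * ((y - x) / ε) ^ p := by gcongr; linarith
  · have hfx : f x ≤ f a := hmono (hIoo ⟨le_rfl, hab⟩) (hIoo hx) hx.1
    have hfy : 1 ≤ f y := hone y (hIoo hy)
    have hpow : 1 ≤ ((y - x) / ε) ^ p := Real.one_le_rpow ((one_le_div hε).2 hlarge) hp.le
    calc f x - f y ≤ f a * 1 * 1 := by linarith
      _ ≤ f a * (A + 1) * ((y - x) / ε) ^ p := by gcongr; linarith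

end Solyanik

theorem local_holder_of_solyanik_general (f : ℝ → ℝ) (p : ℝ) (hp : p ∈ Set.Ioo (0 : ℝ) 1)
    (hmono : ∀ x ∈ Set.Ioo (0 : ℝ) 1, ∀ y ∈ Set.Ioo (0 : ℝ) 1, x ≤ y → f y ≤ f x)
    (hone : ∀ x ∈ Set.Ioo (0 : ℝ) 1, 1 ≤ f x)
    (α₀ A c : ℝ) (hα₀ : α₀ ∈ Set.Ioo (0 : ℝ) 1) (hA : 0 < A) (hc : 0 < c)
    (hsol : ∀ α ∈ Set.Ioo α₀ 1, f α - 1 ≤ A * (1 - α) ^ p)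
    (hsub : ∀ x ∈ Set.Ioo (0 : ℝ) 1, ∀ δ : ℝ, 0 < δ → δ < 1 - x → x * (1 + c * δ) < 1 →
      f x ≤ f (x * (1 + c * δ)) * f (1 - δ)) :
    ∀ K ⊆ Set.Ioo (0 : ℝ) 1, IsCompact K →
      ∃ C : ℝ, ∀ x ∈ K, ∀ y ∈ K, |f x - f y| ≤ C * |x - y| ^ p := by
  intro K hK hKc
  rcases K.eq_empty_or_nonempty with rfl | hne
  · exact ⟨0, by simp⟩
  obtain ⟨a, haK, ha⟩ := hKc.exists_isLeast hne
  obtain ⟨b, hbK, hb⟩ := hKc.exists_isGreatest hne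
  obtain ⟨C, hC⟩ := exists_holder_on_Icc hp.1 hα₀.2 hA.le hc hmono hone hsol hsub
    (hK haK).1 (hK hbK).2
  exact ⟨C, fun x hx y hy => hC x ⟨ha hx, hb hx⟩ y ⟨ha hy, hb hy⟩⟩

/-- If `f : (0,1) → [1,∞)` is continuous and non-increasing, satisfies the Solyanik estimate
`f(α) - 1 ≤ A(1-α)^p` near `1`, and the submultiplicativity `f(x) ≤ f(x(1+cδ)) f(1-δ)`, then
`f` is locally Hölder continuous with exponent `p` on `(0,1)`. -/
theorem local_holder_of_solyanik (f : ℝ → ℝ) (p : ℝ) (hp : p ∈ Set.Ioo (0 : ℝ) 1)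
    (hcont : ContinuousOn f (Set.Ioo (0 : ℝ) 1))
    (hmono : ∀ x ∈ Set.Ioo (0 : ℝ) 1, ∀ y ∈ Set.Ioo (0 : ℝ) 1, x ≤ y → f y ≤ f x)
    (hone : ∀ x ∈ Set.Ioo (0 : ℝ) 1, 1 ≤ f x)
    (α₀ A c : ℝ) (hα₀ : α₀ ∈ Set.Ioo (0 : ℝ) 1) (hA : 0 < A) (hc : 0 < c)
    (hsol : ∀ α ∈ Set.Ioo α₀ 1, f α - 1 ≤ A * (1 - α) ^ p)
    (hsub : ∀ x ∈ Set.Ioo (0 : ℝ) 1, ∀ δ : ℝ, 0 < δ → δ < 1 - x → x * (1 + c * δ) < 1 →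
      f x ≤ f (x * (1 + c * δ)) * f (1 - δ)) :
    ∀ K ⊆ Set.Ioo (0 : ℝ) 1, IsCompact K →
      ∃ C : ℝ, ∀ x ∈ K, ∀ y ∈ K, |f x - f y| ≤ C * |x - y| ^ p :=
  local_holder_of_solyanik_general f p hp hmono hone α₀ A c hα₀ hA hc hsol hsub
end

section
/- Let $\mathcal{B}$ be a homothecy invariant basis consisting of bounded open convex sets in $\mathbb{R}^n$. For every measurable set $E \subseteq \mathbb{R}^n$ of finite measure and every $\alpha \in (0,1)$, there exist dimensional constants $c_n, \kappa_n > 0$ such that for all $\delta \in (0, \kappa_n(1-\alpha))$, $\mathcal{H}_{\mathcal{B},\alpha}(E) \subseteq \mathcal{H}_{\mathcal{B},\, \alpha(1 + c_n \min(\alpha, 1-\alpha)^{2n}\delta)}\big(\mathcal{H}_{\mathcal{B},\, 1 - 3n^{3n/2}\delta}(E)\big)$. -/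
open MeasureTheory Set
open scoped ENNReal

/-- Closure under translations and positive dilations. -/
def HomothecyInvariant (n : ℕ) (𝓑 : Set (Set (EuclideanSpace ℝ (Fin n)))) : Prop :=
  ∀ B ∈ 𝓑, ∀ (v : EuclideanSpace ℝ (Fin n)) (r : ℝ), 0 < r →
    (fun x => v + r • x) '' B ∈ 𝓑

/-- The halo set `𝓗_{𝓑,α}(E) = {x : M_𝓑 χ_E (x) > α}`. -/
def halo (n : ℕ) (𝓑 : Set (Set (EuclideanSpace ℝ (Fin n))))
    (E : Set (EuclideanSpace ℝ (Fin n))) (α : ℝ) : Set (EuclideanSpace ℝ (Fin n)) :=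
  {x | ∃ B ∈ 𝓑, x ∈ B ∧ α * (volume B).toReal < (volume (E ∩ B)).toReal}

open Metric Filter Topology AffineMap
open scoped NNReal Pointwise

/-!
Let `B ∈ 𝓑` with `|E ∩ B| > α |B|` and let `H` be the halo of `E` at level `β = 1 - 3 n^{3n/2} δ`.
It suffices to show `|H ∩ B| ≥ min (|B|, (1 + δ / (C + 1)) |E ∩ B|)` with `C` depending only on `n`.
If `E` has density more than `1 - δ` in `B`, then `B ⊆ H`. Otherwise, by the Lebesgue density
theorem and the intermediate value theorem, almost every `y ∈ E ∩ B` is the centre of a dilate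
`y + ρ (B - y)`, `0 < ρ ≤ 1`, in which `E` has density exactly `1 - δ > β`; these dilates lie in
`H ∩ B`. A linear change of variables puts `closure B` between two balls of dimensional radii
(a simplex of maximal volume plays the role of the John ellipsoid), so these dilates are comparable
to balls and the Vitali covering lemma selects disjoint ones of total measure at least
`|E ∩ B| / C`. A proportion `δ` of their union lies in `H ∩ B \ E`, which gives the gain.
-/

section Sandwich

def simplexEdges {M : Type*} [Sub M] {d : ℕ} (w : Fin (d + 1) → M) : Fin d → M :=
  fun i => w i.succ - w 0

lemma simplexEdges_update_succ {M : Type*} [Sub M] {d : ℕ} (w : Fin (d + 1) → M) (i : Fin d)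
    (x : M) :
    simplexEdges (Function.update w i.succ x) = Function.update (simplexEdges w) i (x - w 0) := by
  ext1 j
  rcases eq_or_ne j i with rfl | hji
  · simp [simplexEdges, Function.update_of_ne (Fin.succ_ne_zero j).symm]
  · simp [simplexEdges, hji, (Fin.succ_ne_zero i).symm]

variable {E : Type*} [NormedAddCommGroup E] [NormedSpace ℝ E] {d : ℕ} (b : Module.Basis (Fin d) ℝ E)

lemma continuous_det_simplexEdges [FiniteDimensional ℝ E] :
    Continuous fun w : Fin (d + 1) → E => b.det (simplexEdges w) := by
  simp only [Module.Basis.det_apply]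
  refine Continuous.matrix_det (continuous_matrix fun i j => ?_)
  simp only [Module.Basis.toMatrix_apply, simplexEdges]
  exact ((b.coord i).continuous_of_finiteDimensional).comp
    ((continuous_apply _).sub (continuous_apply _))

lemma exists_det_simplexEdges_ne_zero {K : Set E} (hK : (interior K).Nonempty) :
    ∃ w : Fin (d + 1) → E, (∀ i, w i ∈ K) ∧ b.det (simplexEdges w) ≠ 0 := by
  obtain ⟨x, hx⟩ := hK
  have hnear : ∀ᶠ t : ℝ in 𝓝[>] 0, ∀ i, x + t • b i ∈ K := by
    refine (Filter.eventually_all.2 fun i => ?_).filter_mono nhdsWithin_le_nhds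
    have hc : Continuous fun t : ℝ => x + t • b i := by fun_prop
    exact (hc.tendsto' 0 x (by simp)).eventually (mem_interior_iff_mem_nhds.1 hx)
  obtain ⟨t, hxt, ht⟩ := (hnear.and self_mem_nhdsWithin).exists
  refine ⟨Fin.cons x fun i => x + t • b i, Fin.cases (interior_subset hx) hxt, ?_⟩
  have : simplexEdges (Fin.cons x fun i => x + t • b i : Fin (d + 1) → E) = fun i => t • b i := by
    ext1 i; simp [simplexEdges]
  rw [this, AlternatingMap.map_smul_univ, b.det_self]
  simp [(ne_of_gt ht)]

lemma exists_isMaxOn_abs_det_simplexEdges [FiniteDimensional ℝ E] {K : Set E} (hKc : IsCompact K)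
    (hK : (interior K).Nonempty) :
    ∃ v : Fin (d + 1) → E, (∀ i, v i ∈ K) ∧ b.det (simplexEdges v) ≠ 0 ∧
      ∀ w : Fin (d + 1) → E, (∀ i, w i ∈ K) →
        |b.det (simplexEdges w)| ≤ |b.det (simplexEdges v)| := by
  obtain ⟨w₀, hw₀K, hw₀⟩ := exists_det_simplexEdges_ne_zero b hK
  obtain ⟨v, hvK, hmax⟩ := (isCompact_univ_pi fun _ => hKc).exists_isMaxOn
    ⟨w₀, fun i _ => hw₀K i⟩ (continuous_det_simplexEdges b).abs.continuousOn
  have hv : ∀ w : Fin (d + 1) → E, (∀ i, w i ∈ K) →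
      |b.det (simplexEdges w)| ≤ |b.det (simplexEdges v)| := fun w hw => hmax fun i _ => hw i
  refine ⟨v, fun i => hvK i (mem_univ i), fun h0 => hw₀ ?_, hv⟩
  simpa [h0] using hv w₀ hw₀K

/-- By Cramer's rule, the `i`-th coordinate of `x - v 0` is the ratio of the volumes of two
simplices inscribed in `K`, the second of which is maximal. -/
lemma exists_linearEquiv_abs_repr_le_one {K : Set E} {v : Fin (d + 1) → E}
    (hvK : ∀ i, v i ∈ K) (hv0 : b.det (simplexEdges v) ≠ 0)
    (hmax : ∀ w : Fin (d + 1) → E, (∀ i, w i ∈ K) →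
        |b.det (simplexEdges w)| ≤ |b.det (simplexEdges v)|) :
    ∃ L : E ≃ₗ[ℝ] E, (∀ i, L (simplexEdges v i) = b i) ∧
      ∀ x ∈ K, ∀ i, |b.repr (L (x - v 0)) i| ≤ 1 := by
  obtain ⟨hli, hsp⟩ := (b.is_basis_iff_det).2 (isUnit_iff_ne_zero.2 hv0)
  set e := Module.Basis.mk hli hsp.ge
  refine ⟨e.repr ≪≫ₗ b.repr.symm, fun i => ?_, fun x hx i => ?_⟩
  · rw [← Module.Basis.mk_apply hli hsp.ge, LinearEquiv.trans_apply, Module.Basis.repr_self]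
    simp
  · have hcramer := congrArg (fun f => f (x - v 0)) (b.det_smul_mk_coord_eq_det_update hli hsp.ge i)
    simp only [LinearMap.smul_apply, smul_eq_mul, MultilinearMap.toLinearMap_apply] at hcramer
    have hle := hmax (Function.update v i.succ x) fun j => by
      rcases eq_or_ne j i.succ with rfl | hj
      · simpa using hx
      · simpa [hj] using hvK j
    rw [simplexEdges_update_succ, ← AlternatingMap.coe_multilinearMap, ← hcramer, abs_mul] at hle
    simpa [e] using (mul_le_iff_le_one_right (abs_pos.2 hv0)).1 hle

lemma norm_le_sum_norm_basis {z : E} (hz : ∀ i, |b.repr z i| ≤ 1) : ‖z‖ ≤ ∑ i, ‖b i‖ := by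
  conv_lhs => rw [← b.sum_repr z]
  refine (norm_sum_le _ _).trans (Finset.sum_le_sum fun i _ => ?_)
  rw [norm_smul, Real.norm_eq_abs]
  exact mul_le_of_le_one_left (norm_nonneg _) (hz i)

lemma exists_closedBall_subset_repr_simplex [FiniteDimensional ℝ E] :
    ∃ g : E, ∃ r > 0, ∀ z ∈ closedBall g r, (∀ i, 0 ≤ b.repr z i) ∧ ∑ i, b.repr z i ≤ 1 := by
  set U : Set (Fin d → ℝ) := univ.pi (fun _ => Ioi 0) ∩ {c | ∑ i, c i < 1}
  have hU : IsOpen U := (isOpen_set_pi finite_univ fun _ _ => isOpen_Ioi).inter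
    (isOpen_lt (continuous_finsetSum _ fun i _ => continuous_apply i) continuous_const)
  set g := b.equivFunL.symm fun _ => 1 / ((d : ℝ) + 1)
  have hg : b.equivFunL g ∈ U := by
    simp only [U, g, ContinuousLinearEquiv.apply_symm_apply, mem_inter_iff, mem_univ_pi, mem_Ioi,
      mem_ofPred_eq, Finset.sum_const, Finset.card_univ, Fintype.card_fin, nsmul_eq_mul]
    refine ⟨fun _ => by positivity, ?_⟩
    rw [← div_eq_mul_one_div, div_lt_one (by positivity)]
    linarith
  obtain ⟨r, hr, hball⟩ := nhds_basis_closedBall.mem_iff.1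
    ((hU.preimage b.equivFunL.continuous).mem_nhds hg)
  exact ⟨g, r, hr, fun z hz => ⟨fun i => le_of_lt ((hball hz).1 i (mem_univ i)), (hball hz).2.le⟩⟩

lemma Convex.add_sum_smul_simplexEdges_mem {K : Set E} (hK : Convex ℝ K) {v : Fin (d + 1) → E}
    (hv : ∀ i, v i ∈ K) {c : Fin d → ℝ} (hc0 : ∀ i, 0 ≤ c i) (hc1 : ∑ i, c i ≤ 1) :
    v 0 + ∑ i, c i • simplexEdges v i ∈ K := by
  have hsum : v 0 + ∑ i, c i • simplexEdges v i =
      ∑ i, (Fin.cons (1 - ∑ j, c j) c : Fin (d + 1) → ℝ) i • v i := by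
    simp only [Fin.sum_univ_succ, Fin.cons_zero, Fin.cons_succ, simplexEdges, smul_sub,
      Finset.sum_sub_distrib, ← Finset.sum_smul]
    module
  rw [hsum]
  refine hK.sum_mem (fun i _ => ?_) ?_ fun i _ => hv i
  · refine Fin.cases ?_ (fun j => ?_) i
    · simpa using hc1
    · simpa using hc0 j
  · simp [Fin.sum_univ_succ]

/-- A weak form of John's theorem, with a simplex of maximal volume inscribed in `K` in place of
the John ellipsoid. -/
theorem exists_uniform_closedBall_sandwich (E : Type*) [NormedAddCommGroup E] [NormedSpace ℝ E]
    [FiniteDimensional ℝ E] :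
    ∃ r R : ℝ, 0 < r ∧ ∀ K : Set E, IsCompact K → Convex ℝ K → (interior K).Nonempty →
      ∃ (L : E ≃L[ℝ] E) (g : E), closedBall g r ⊆ L '' K ∧ L '' K ⊆ closedBall g R := by
  set b := Module.finBasis ℝ E
  obtain ⟨g₀, r, hr, hsimplex⟩ := exists_closedBall_subset_repr_simplex b
  refine ⟨r, (∑ i, ‖b i‖) + ‖g₀‖, hr, fun K hKc hKconv hK => ?_⟩
  obtain ⟨v, hvK, hv0, hmax⟩ := exists_isMaxOn_abs_det_simplexEdges b hKc hK
  obtain ⟨L, hLe, hLK⟩ := exists_linearEquiv_abs_repr_le_one b hvK hv0 hmax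
  refine ⟨L.toContinuousLinearEquiv, L (v 0) + g₀, fun z hz => ?_, ?_⟩
  · have hz' : z - L (v 0) ∈ closedBall g₀ r := by
      rw [mem_closedBall, dist_eq_norm] at hz ⊢
      convert hz using 2; abel
    obtain ⟨hc0, hc1⟩ := hsimplex _ hz'
    refine ⟨_, hKconv.add_sum_smul_simplexEdges_mem hvK hc0 hc1, ?_⟩
    change L _ = z
    simp only [map_add, map_sum, map_smul, hLe, b.sum_repr]
    abel
  · rintro _ ⟨x, hx, rfl⟩
    rw [mem_closedBall, dist_eq_norm]
    calc ‖L x - (L (v 0) + g₀)‖ = ‖L (x - v 0) - g₀‖ := by rw [map_sub]; abel_nf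
      _ ≤ ‖L (x - v 0)‖ + ‖g₀‖ := norm_sub_le _ _
      _ ≤ (∑ i, ‖b i‖) + ‖g₀‖ := by gcongr; exact norm_le_sum_norm_basis b (hLK x hx)

end Sandwich

section Homothety

variable {E : Type*} [NormedAddCommGroup E] [NormedSpace ℝ E]

lemma dist_homothety_homothety (y p q : E) (r : ℝ) :
    dist (homothety y r p) (homothety y r q) = |r| * dist p q := by
  simp [homothety_apply, dist_eq_norm, ← smul_sub, norm_smul]

lemma Convex.homothety_image_subset {B : Set E} (hB : Convex ℝ B) {y : E} (hy : y ∈ B) {r : ℝ}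
    (hr₀ : 0 ≤ r) (hr₁ : r ≤ 1) : homothety y r '' B ⊆ B := by
  rintro _ ⟨x, hx, rfl⟩
  rw [homothety_apply, vsub_eq_sub, vadd_eq_add, add_comm]
  exact hB.add_smul_sub_mem hy hx ⟨hr₀, hr₁⟩

lemma Convex.homothety_image_mono {B : Set E} (hB : Convex ℝ B) {y : E} (hy : y ∈ B) {r r' : ℝ}
    (hr : 0 < r) (hrr' : r ≤ r') : homothety y r '' B ⊆ homothety y r' '' B := by
  have hr' : 0 < r' := hr.trans_le hrr'
  have : homothety y r '' B = homothety y r' '' (homothety y (r / r') '' B) := by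
    rw [image_image]
    refine image_congr fun x _ => ?_
    rw [← homothety_mul_apply, mul_div_cancel₀ _ hr'.ne']
  rw [this]
  exact image_mono (hB.homothety_image_subset hy (by positivity) ((div_le_one hr').2 hrr'))

lemma homothety_image_subset_closedBall {Q : Set E} {g : E} {R : ℝ} (hQ : Q ⊆ closedBall g R)
    (y : E) {r : ℝ} (hr : 0 ≤ r) : homothety y r '' Q ⊆ closedBall (homothety y r g) (r * R) := by
  rintro _ ⟨q, hq, rfl⟩
  rw [mem_closedBall, dist_homothety_homothety, abs_of_nonneg hr]
  exact mul_le_mul_of_nonneg_left (hQ hq) hr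

lemma homothety_image_subset_closedBall_of_inter {Q : Set E} {g : E} {R : ℝ}
    (hQ : Q ⊆ closedBall g R) {y z : E} {r s : ℝ} (hr : 0 ≤ r) (hrs : r ≤ 2 * s)
    (hne : (homothety y r '' Q ∩ homothety z s '' Q).Nonempty) :
    homothety y r '' Q ⊆ closedBall (homothety z s g) (s * (5 * R)) := by
  obtain ⟨p, hpy, hpz⟩ := hne
  have hs : 0 ≤ s := by linarith
  have hR : 0 ≤ R := by
    obtain ⟨q, hq, -⟩ := hpz
    exact dist_nonneg.trans (hQ hq)
  have hy := homothety_image_subset_closedBall hQ y hr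
  have hz := homothety_image_subset_closedBall hQ z hs
  intro w hw
  rw [mem_closedBall] at *
  calc dist w (homothety z s g)
      ≤ dist w (homothety y r g) + dist (homothety y r g) p + dist p (homothety z s g) :=
        dist_triangle4 _ _ _ _
    _ ≤ r * R + r * R + s * R := by
        gcongr
        · exact hy hw
        · rw [dist_comm]; exact hy hpy
        · exact hz hpz
    _ ≤ s * (5 * R) := by nlinarith

lemma ContinuousLinearEquiv.image_homothety_image {F : Type*} [NormedAddCommGroup F]
    [NormedSpace ℝ F] (L : E ≃L[ℝ] F) (y : E) (r : ℝ) (B : Set E) :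
    L '' (homothety y r '' B) = homothety (L y) r '' (L '' B) := by
  simp only [image_image, homothety_apply, vsub_eq_sub, vadd_eq_add, map_add, L.map_smul, map_sub]

lemma homothety_image_eq_singleton_add_smul (y : E) (r : ℝ) (B : Set E) :
    homothety y r '' B = {y} + r • (-y +ᵥ B) := by
  rw [singleton_add, ← image_smul, ← image_vadd, image_image, image_image]
  refine image_congr fun x _ => ?_
  rw [homothety_apply, vsub_eq_sub, vadd_eq_add, vadd_eq_add, neg_add_eq_sub, add_comm]

end Homothety

section Defect

variable {α ι : Type*} [MeasurableSpace α] {μ : Measure α}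

lemma measure_sdiff_eq_ofReal_mul {A D : Set α} (hA : MeasurableSet A) (hD : μ D ≠ ∞) {γ : ℝ}
    (hγ : γ ≤ 1) (h : μ.real (A ∩ D) = γ * μ.real D) :
    μ (D \ A) = ENNReal.ofReal (1 - γ) * μ D := by
  have hreal : μ.real (D \ A) = (1 - γ) * μ.real D := by
    have := measureReal_inter_add_sdiff (μ := μ) (s := D) hA hD
    rw [inter_comm] at h
    linarith
  rw [← ofReal_measureReal (measure_ne_top_of_subset sdiff_subset hD), hreal,
    ENNReal.ofReal_mul (by linarith), ofReal_measureReal hD]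

lemma measure_biUnion_sdiff_eq_mul {u : Set ι} (hu : u.Countable) {D : ι → Set α}
    (hdisj : u.PairwiseDisjoint D) (hD : ∀ i ∈ u, MeasurableSet (D i)) {A : Set α}
    (hA : MeasurableSet A) {c : ℝ≥0∞} (hc : ∀ i ∈ u, μ (D i \ A) = c * μ (D i)) :
    μ ((⋃ i ∈ u, D i) \ A) = c * μ (⋃ i ∈ u, D i) := by
  simp only [iUnion_sdiff]
  rw [measure_biUnion hu (hdisj.mono fun i => sdiff_subset) fun i hi => (hD i hi).diff hA,
    measure_biUnion hu hdisj hD, ← ENNReal.tsum_mul_left]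
  exact tsum_congr fun i => hc i i.2

end Defect

lemma ContinuousOn.of_dist_le {α β γ : Type*} [TopologicalSpace α] [PseudoMetricSpace β]
    [PseudoMetricSpace γ] {f : α → β} {g : α → γ} {s : Set α} (hg : ContinuousOn g s)
    (h : ∀ a ∈ s, ∀ b ∈ s, dist (f a) (f b) ≤ dist (g a) (g b)) : ContinuousOn f s := by
  refine continuousOn_iff'.2 fun a ha ε hε => ?_
  filter_upwards [continuousOn_iff'.1 hg a ha ε hε, self_mem_nhdsWithin] with x hx hxs
  exact (h x hxs a ha).trans_lt hx

section Measure

variable {E : Type*} [NormedAddCommGroup E] [NormedSpace ℝ E] [MeasurableSpace E] [BorelSpace E]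
  [FiniteDimensional ℝ E] (μ : Measure E) [μ.IsAddHaarMeasure]

lemma addHaar_image_homothety_of_nonneg (y : E) {r : ℝ} (hr : 0 ≤ r) (B : Set E) :
    μ (homothety y r '' B) = ENNReal.ofReal (r ^ Module.finrank ℝ E) * μ B := by
  rw [Measure.addHaar_image_homothety, abs_of_nonneg (pow_nonneg hr _)]

lemma ae_exists_homothety_image_density_gt {A B : Set E} (hA : MeasurableSet A)
    (hB : MeasurableSet B) (hB₀ : μ B ≠ 0) (hB₁ : μ B ≠ ∞) {θ : ℝ} (hθ₀ : 0 ≤ θ) (hθ : θ < 1) :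
    ∀ᵐ y ∂μ, y ∈ A → ∃ r ∈ Ioc (0 : ℝ) 1,
      θ * μ.real (homothety y r '' B) < μ.real (A ∩ homothety y r '' B) := by
  filter_upwards [Besicovitch.ae_tendsto_measure_inter_div_of_measurableSet μ hA] with y hy hyA
  rw [indicator_of_mem hyA, Pi.one_apply] at hy
  have hdensity := Measure.tendsto_addHaar_inter_smul_one_of_density_one μ A y hy (-y +ᵥ B)
    (hB.const_vadd _) (by rwa [measure_vadd]) (by rwa [measure_vadd])
  simp only [← homothety_image_eq_singleton_add_smul] at hdensity
  obtain ⟨r, hθr, hr⟩ := ((hdensity.eventually (lt_mem_nhds (ENNReal.ofReal_lt_one.2 hθ))).and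
    (Ioc_mem_nhdsGT one_pos)).exists
  refine ⟨r, hr, ?_⟩
  have hD : μ (homothety y r '' B) ≠ ∞ := by
    rw [addHaar_image_homothety_of_nonneg μ y hr.1.le]
    exact ENNReal.mul_ne_top ENNReal.ofReal_ne_top hB₁
  rw [ENNReal.lt_div_iff_mul_lt (Or.inr ENNReal.ofReal_ne_top) (Or.inl hD)] at hθr
  have := ENNReal.toReal_strict_mono (measure_ne_top_of_subset inter_subset_right hD) hθr
  rwa [ENNReal.toReal_mul, ENNReal.toReal_ofReal hθ₀] at this

lemma measureReal_homothety_image (y : E) {r : ℝ} (hr : 0 ≤ r) (B : Set E) :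
    μ.real (homothety y r '' B) = r ^ Module.finrank ℝ E * μ.real B := by
  rw [Measure.real, addHaar_image_homothety_of_nonneg μ y hr, ENNReal.toReal_mul,
    ENNReal.toReal_ofReal (by positivity), Measure.real]

lemma measure_homothety_image_ne_top (y : E) {r : ℝ} (hr : 0 ≤ r) {B : Set E} (hB : μ B ≠ ∞) :
    μ (homothety y r '' B) ≠ ∞ := by
  rw [addHaar_image_homothety_of_nonneg μ y hr]
  exact ENNReal.mul_ne_top ENNReal.ofReal_ne_top hB

lemma Convex.dist_measureReal_inter_homothety_image_le {A B : Set E} (hBc : Convex ℝ B)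
    (hBo : IsOpen B) (hB : μ B ≠ ∞) {y : E} (hy : y ∈ B) {r₁ r₂ : ℝ} (hr₁ : 0 < r₁)
    (hr₂ : 0 < r₂) :
    dist (μ.real (A ∩ homothety y r₁ '' B)) (μ.real (A ∩ homothety y r₂ '' B)) ≤
      dist (μ.real (homothety y r₁ '' B)) (μ.real (homothety y r₂ '' B)) := by
  wlog h : r₁ ≤ r₂ generalizing r₁ r₂
  · have := this hr₂ hr₁ (le_of_not_ge h)
    rwa [dist_comm, dist_comm (μ.real (homothety y r₂ '' B))] at this
  set D : ℝ → Set E := fun r => homothety y r '' B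
  have hsub : D r₁ ⊆ D r₂ := hBc.homothety_image_mono hy hr₁ h
  have hfin : μ (D r₂) ≠ ∞ := measure_homothety_image_ne_top μ y hr₂.le hB
  have hmono : μ.real (A ∩ D r₁) ≤ μ.real (A ∩ D r₂) :=
    measureReal_mono (inter_subset_inter_right A hsub)
      (measure_ne_top_of_subset inter_subset_right hfin)
  have hcover : A ∩ D r₂ ⊆ (A ∩ D r₁) ∪ (D r₂ \ D r₁) := fun x hx => by
    by_cases hx₁ : x ∈ D r₁
    · exact Or.inl ⟨hx.1, hx₁⟩
    · exact Or.inr ⟨hx.2, hx₁⟩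
  have hgrowth : μ.real (A ∩ D r₂) ≤ μ.real (A ∩ D r₁) + μ.real (D r₂ \ D r₁) :=
    (measureReal_mono hcover (measure_ne_top_of_subset
      (union_subset (inter_subset_right.trans hsub) sdiff_subset) hfin)).trans
      (measureReal_union_le _ _)
  rw [measureReal_sdiff hsub (homothety_isOpenMap y r₁ hr₁.ne' _ hBo).measurableSet hfin]
    at hgrowth
  rw [Real.dist_eq, Real.dist_eq, abs_sub_comm, abs_of_nonneg (by linarith), abs_sub_comm,
    abs_of_nonneg (by linarith)]
  linarith

lemma Convex.exists_measureReal_inter_homothety_image_eq {A B : Set E} (hBc : Convex ℝ B)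
    (hBo : IsOpen B) (hB : μ B ≠ ∞) {y : E} (hy : y ∈ B) {γ r₀ : ℝ} (hr₀ : r₀ ∈ Ioc (0 : ℝ) 1)
    (hr₀γ : γ * μ.real (homothety y r₀ '' B) < μ.real (A ∩ homothety y r₀ '' B))
    (hAB : μ.real (A ∩ B) ≤ γ * μ.real B) :
    ∃ ρ ∈ Ioc (0 : ℝ) 1, μ.real (A ∩ homothety y ρ '' B) = γ * μ.real (homothety y ρ '' B) := by
  set f : ℝ → ℝ := fun r => μ.real (A ∩ homothety y r '' B)
  set g : ℝ → ℝ := fun r => μ.real (homothety y r '' B)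
  have hg : ContinuousOn g (Icc r₀ 1) :=
    ((continuous_pow _).mul continuous_const).continuousOn.congr fun r hr =>
      measureReal_homothety_image μ y (hr₀.1.le.trans hr.1) B
  have hf : ContinuousOn f (Icc r₀ 1) := hg.of_dist_le fun a ha b hb =>
    hBc.dist_measureReal_inter_homothety_image_le μ hBo hB hy (hr₀.1.trans_le ha.1)
      (hr₀.1.trans_le hb.1)
  have h1 : f 1 - γ * g 1 ≤ 0 := by simpa [f, g, homothety_one, sub_nonpos] using hAB
  have hF : ContinuousOn (fun r => f r - γ * g r) (Icc r₀ 1) := hf.sub (continuousOn_const.mul hg)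
  obtain ⟨ρ, hρ, hρ0⟩ := intermediate_value_Icc' hr₀.2 hF ⟨h1, by simp only [f, g]; linarith⟩
  exact ⟨ρ, ⟨hr₀.1.trans_le hρ.1, hρ.2⟩, sub_eq_zero.1 hρ0⟩

lemma Convex.addHaar_closure {B : Set E} (hB : Convex ℝ B) : μ (closure B) = μ B := by
  refine le_antisymm ?_ (measure_mono subset_closure)
  calc μ (closure B) ≤ μ (interior B ∪ frontier B) := by
        rw [closure_eq_interior_union_frontier]
    _ ≤ μ B + 0 := (measure_union_le _ _).trans
        (add_le_add (measure_mono interior_subset) (hB.addHaar_frontier μ).le)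
    _ = μ B := add_zero _

lemma addHaar_image_symm_closedBall_le (L : E ≃L[ℝ] E) {B : Set E} (hB : Convex ℝ B) {g : E}
    {r : ℝ} (hr : 0 < r) (hin : closedBall g r ⊆ L '' closure B) (c z : E) {s R : ℝ}
    (hs : 0 ≤ s) (hR : 0 ≤ R) :
    μ (L.symm '' closedBall c (s * R)) ≤
      ENNReal.ofReal ((R / r) ^ Module.finrank ℝ E) * μ (homothety z s '' B) := by
  set d := Module.finrank ℝ E
  set detL := ENNReal.ofReal |LinearMap.det (L.symm : E →ₗ[ℝ] E)|
  have hball : detL * (ENNReal.ofReal (r ^ d) * μ (ball 0 1)) ≤ μ B := by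
    rw [← Measure.addHaar_closedBall μ g hr.le, ← Measure.addHaar_image_continuousLinearEquiv,
      ← hB.addHaar_closure μ]
    exact measure_mono ((image_mono hin).trans (by rw [L.symm_image_image]))
  have hpow : ENNReal.ofReal ((s * R) ^ d) =
      ENNReal.ofReal ((R / r) ^ d) * ENNReal.ofReal (s ^ d) * ENNReal.ofReal (r ^ d) := by
    rw [← ENNReal.ofReal_mul (by positivity), ← ENNReal.ofReal_mul (by positivity), ← mul_pow,
      ← mul_pow]
    congr 2
    field_simp
  rw [Measure.addHaar_image_continuousLinearEquiv, Measure.addHaar_closedBall μ _ (by positivity),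
    addHaar_image_homothety_of_nonneg μ z hs, hpow]
  calc _ = ENNReal.ofReal ((R / r) ^ d) * ENNReal.ofReal (s ^ d) *
        (detL * (ENNReal.ofReal (r ^ d) * μ (ball 0 1))) := by ring
    _ ≤ _ := by
      rw [mul_assoc]
      gcongr

/-- In the position given by `exists_uniform_closedBall_sandwich`, the dilates of `B` are
comparable to balls. -/
theorem exists_uniform_engulfing_constant :
    ∃ C : ℝ≥0, ∀ B : Set E, IsOpen B → Bornology.IsBounded B → Convex ℝ B → B.Nonempty →
      ∀ (z : E) (s : ℝ), 0 < s → ∃ S : Set E, μ S ≤ C * μ (homothety z s '' B) ∧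
        ∀ (y : E) (r : ℝ), 0 ≤ r → r ≤ 2 * s →
          (homothety y r '' B ∩ homothety z s '' B).Nonempty → homothety y r '' B ⊆ S := by
  obtain ⟨r₀, R₀, hr₀, hsandwich⟩ := exists_uniform_closedBall_sandwich E
  refine ⟨((5 * R₀ / r₀) ^ Module.finrank ℝ E).toNNReal, fun B hBo hBb hBc hBne z s hs => ?_⟩
  have hint : (interior (closure B)).Nonempty :=
    hBne.mono (hBo.subset_interior_iff.2 subset_closure)
  obtain ⟨L, g, hin, hout⟩ := hsandwich _ hBb.isCompact_closure hBc.closure hint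
  have hR₀ : 0 ≤ R₀ := by simpa using hout (hin (mem_closedBall_self hr₀.le))
  have hQ : L '' B ⊆ closedBall g R₀ := (image_mono subset_closure).trans hout
  refine ⟨L.symm '' closedBall (homothety (L z) s g) (s * (5 * R₀)),
    addHaar_image_symm_closedBall_le μ L hBc hr₀ hin _ z hs.le (by positivity),
    fun y r hr hrs hne w hw => ?_⟩
  have hsub := homothety_image_subset_closedBall_of_inter hQ hr hrs (by
    rw [← L.image_homothety_image, ← L.image_homothety_image, ← image_inter L.injective]
    exact hne.image _)
  exact ⟨L w, hsub (by rw [← L.image_homothety_image]; exact mem_image_of_mem L hw),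
    L.symm_apply_apply w⟩

def IsDilateVitaliConstant (B : Set E) (C : ℝ≥0) : Prop :=
  ∀ G ⊆ B, ∀ ρ : E → ℝ, (∀ y ∈ G, ρ y ∈ Ioc (0 : ℝ) 1) →
    ∃ u ⊆ G, u.Countable ∧ u.PairwiseDisjoint (fun y => homothety y (ρ y) '' B) ∧
      μ G ≤ C * μ (⋃ y ∈ u, homothety y (ρ y) '' B)

theorem exists_uniform_isDilateVitaliConstant :
    ∃ C : ℝ≥0, ∀ B : Set E, IsOpen B → Bornology.IsBounded B → Convex ℝ B →
      IsDilateVitaliConstant μ B C := by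
  obtain ⟨C, hC⟩ := exists_uniform_engulfing_constant μ
  refine ⟨C, fun B hBo hBb hBc G hGB ρ hρ => ?_⟩
  rcases G.eq_empty_or_nonempty with rfl | ⟨y₀, hy₀⟩
  · exact ⟨∅, empty_subset _, countable_empty, pairwiseDisjoint_empty, by simp⟩
  set D : E → Set E := fun y => homothety y (ρ y) '' B
  have hDo : ∀ y ∈ G, IsOpen (D y) := fun y hy => homothety_isOpenMap y _ (hρ y hy).1.ne' _ hBo
  have hmem : ∀ y ∈ G, y ∈ D y := fun y hy => ⟨y, hGB hy, homothety_apply_same _ _⟩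
  choose! S hSμ hS using fun z (hz : z ∈ G) =>
    hC B hBo hBb hBc ⟨y₀, hGB hy₀⟩ z (ρ z) (hρ z hz).1
  obtain ⟨u, huG, hdisj, hcover⟩ := Vitali.exists_disjoint_subfamily_covering_enlargement D G ρ 2
    one_lt_two (fun y hy => (hρ y hy).1.le) 1 (fun y hy => (hρ y hy).2) fun y hy => ⟨y, hmem y hy⟩
  have hu : u.Countable := hdisj.countable_of_isOpen (fun y hy => hDo y (huG hy))
    fun y hy => ⟨y, hmem y (huG hy)⟩
  refine ⟨u, huG, hu, hdisj, ?_⟩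
  have hGS : G ⊆ ⋃ z ∈ u, S z := fun y hy => by
    obtain ⟨z, hz, hne, hyz⟩ := hcover y hy
    exact mem_biUnion hz (hS z (huG hz) y (ρ y) (hρ y hy).1.le hyz hne (hmem y hy))
  calc μ G ≤ ∑' z : u, μ (S z) := (measure_mono hGS).trans (measure_biUnion_le μ hu _)
    _ ≤ ∑' z : u, C * μ (D z) := ENNReal.tsum_le_tsum fun z => hSμ z (huG z.2)
    _ = C * μ (⋃ z ∈ u, D z) := by
      rw [ENNReal.tsum_mul_left,
        measure_biUnion hu hdisj fun z hz => (hDo z (huG hz)).measurableSet]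

lemma ae_exists_stopping_radius {A B : Set E} (hA : MeasurableSet A) (hBo : IsOpen B)
    (hBb : Bornology.IsBounded B) (hBc : Convex ℝ B) {γ : ℝ} (hγ₀ : 0 ≤ γ) (hγ₁ : γ < 1)
    (hAB : μ.real (A ∩ B) ≤ γ * μ.real B) :
    ∀ᵐ y ∂μ, y ∈ A ∩ B → ∃ ρ ∈ Ioc (0 : ℝ) 1,
      μ.real (A ∩ homothety y ρ '' B) = γ * μ.real (homothety y ρ '' B) := by
  rcases B.eq_empty_or_nonempty with rfl | hBne
  · simp
  filter_upwards [ae_exists_homothety_image_density_gt μ hA hBo.measurableSet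
    (hBo.measure_pos μ hBne).ne' hBb.measure_lt_top.ne hγ₀ hγ₁] with y hy hyAB
  obtain ⟨r₀, hr₀, hr₀γ⟩ := hy hyAB.1
  exact hBc.exists_measureReal_inter_homothety_image_eq μ hBo hBb.measure_lt_top.ne hyAB.2 hr₀
    hr₀γ hAB

variable {A B H : Set E} {γ : ℝ}

lemma inter_ae_le_of_homothety_image_subset (hA : MeasurableSet A) (hBo : IsOpen B)
    (hBb : Bornology.IsBounded B) (hBc : Convex ℝ B) (hγ₀ : 0 ≤ γ) (hγ₁ : γ < 1)
    (hH : ∀ y ∈ B, ∀ ρ ∈ Ioc (0 : ℝ) 1, γ * μ.real (homothety y ρ '' B) ≤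
      μ.real (A ∩ homothety y ρ '' B) → homothety y ρ '' B ⊆ H)
    (hAB : μ.real (A ∩ B) ≤ γ * μ.real B) : (A ∩ B : Set E) ≤ᵐ[μ] H := by
  filter_upwards [ae_exists_stopping_radius μ hA hBo hBb hBc hγ₀ hγ₁ hAB] with y hy hyAB
  obtain ⟨ρ, hρ, hργ⟩ := hy hyAB
  exact hH y hyAB.2 ρ hρ hργ.ge ⟨y, hyAB.2, homothety_apply_same _ _⟩

/-- `W` is the union of a Vitali subfamily of dilates, one about each density point of `A ∩ B`,
in which `A` has density exactly `γ`. -/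
theorem IsDilateVitaliConstant.exists_stopping_union {C : ℝ≥0} (hV : IsDilateVitaliConstant μ B C)
    (hA : MeasurableSet A) (hBo : IsOpen B) (hBb : Bornology.IsBounded B) (hBc : Convex ℝ B)
    (hγ₀ : 0 ≤ γ) (hγ₁ : γ < 1)
    (hH : ∀ y ∈ B, ∀ ρ ∈ Ioc (0 : ℝ) 1, γ * μ.real (homothety y ρ '' B) ≤
      μ.real (A ∩ homothety y ρ '' B) → homothety y ρ '' B ⊆ H)
    (hAB : μ.real (A ∩ B) ≤ γ * μ.real B) :
    ∃ W ⊆ H ∩ B, μ (A ∩ B) ≤ C * μ W ∧ μ (W \ A) = ENNReal.ofReal (1 - γ) * μ W := by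
  set D : E → ℝ → Set E := fun y ρ => homothety y ρ '' B
  set G := {y ∈ A ∩ B | ∃ ρ ∈ Ioc (0 : ℝ) 1, μ.real (A ∩ D y ρ) = γ * μ.real (D y ρ)}
  have hG : (A ∩ B : Set E) ≤ᵐ[μ] G := by
    filter_upwards [ae_exists_stopping_radius μ hA hBo hBb hBc hγ₀ hγ₁ hAB] with y hy hyAB
    exact ⟨hyAB, hy hyAB⟩
  choose! ρ hρ hργ using fun y (hy : y ∈ G) => hy.2
  obtain ⟨u, huG, hu, hdisj, hGW⟩ := hV G (fun y hy => hy.1.2) ρ hρ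
  have hDHB : ∀ y ∈ u, D y (ρ y) ⊆ H ∩ B := fun y hy => subset_inter
    (hH y (huG hy).1.2 (ρ y) (hρ y (huG hy)) (hργ y (huG hy)).ge)
    (hBc.homothety_image_subset (huG hy).1.2 (hρ y (huG hy)).1.le (hρ y (huG hy)).2)
  refine ⟨⋃ y ∈ u, D y (ρ y), iUnion₂_subset hDHB, (measure_mono_ae hG).trans hGW,
    measure_biUnion_sdiff_eq_mul hu hdisj (fun y hy => ?_) hA fun y hy => ?_⟩
  · exact (homothety_isOpenMap y _ (hρ y (huG hy)).1.ne' _ hBo).measurableSet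
  · exact measure_sdiff_eq_ofReal_mul hA (measure_ne_top_of_subset
      ((hDHB y hy).trans inter_subset_right) hBb.measure_lt_top.ne) hγ₁.le (hργ y (huG hy))

theorem IsDilateVitaliConstant.min_le_measureReal_inter {C : ℝ≥0}
    (hV : IsDilateVitaliConstant μ B C) (hA : MeasurableSet A) (hBo : IsOpen B)
    (hBb : Bornology.IsBounded B) (hBc : Convex ℝ B) (hγ₀ : 0 ≤ γ) (hγ₁ : γ < 1)
    (hH : ∀ y ∈ B, ∀ ρ ∈ Ioc (0 : ℝ) 1, γ * μ.real (homothety y ρ '' B) ≤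
      μ.real (A ∩ homothety y ρ '' B) → homothety y ρ '' B ⊆ H) :
    min (μ.real B) ((1 + (1 - γ) / (C + 1)) * μ.real (A ∩ B)) ≤ μ.real (H ∩ B) := by
  rcases lt_or_ge (γ * μ.real B) (μ.real (A ∩ B)) with hdense | hsparse
  · obtain ⟨y, -, hy⟩ := nonempty_of_measureReal_ne_zero
      (lt_of_le_of_lt (by positivity) hdense).ne'
    have hBH : B ⊆ H := by
      simpa [homothety_one] using hH y hy 1 ⟨one_pos, le_rfl⟩ (by simpa using hdense.le)
    rw [inter_eq_right.2 hBH]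
    exact min_le_left _ _
  obtain ⟨W, hWHB, hAW, hWA⟩ := hV.exists_stopping_union μ hA hBo hBb hBc hγ₀ hγ₁ hH hsparse
  have hgain : ENNReal.ofReal (1 - γ) * μ (A ∩ B) ≤ C * μ ((H ∩ B) \ A) :=
    calc ENNReal.ofReal (1 - γ) * μ (A ∩ B) ≤ ENNReal.ofReal (1 - γ) * (C * μ W) := by gcongr
      _ = C * μ (W \ A) := by rw [hWA]; ring
      _ ≤ C * μ ((H ∩ B) \ A) := by gcongr
  have hHB : μ (H ∩ B) ≠ ∞ := measure_ne_top_of_subset inter_subset_right hBb.measure_lt_top.ne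
  replace hgain := ENNReal.toReal_mono (ENNReal.mul_ne_top ENNReal.coe_ne_top
    (measure_ne_top_of_subset sdiff_subset hHB)) hgain
  rw [ENNReal.toReal_mul, ENNReal.toReal_mul, ENNReal.toReal_ofReal (by linarith),
    ENNReal.coe_toReal, ← Measure.real, ← Measure.real] at hgain
  have hsplit := measureReal_inter_add_sdiff (μ := μ) (s := H ∩ B) hA hHB
  have hAHB : μ.real (A ∩ B) ≤ μ.real (H ∩ B ∩ A) := by
    refine ENNReal.toReal_mono (measure_ne_top_of_subset inter_subset_left hHB)
      (measure_mono_ae ?_)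
    filter_upwards [inter_ae_le_of_homothety_image_subset μ hA hBo hBb hBc hγ₀ hγ₁ hH hsparse]
      with y hy hyAB using ⟨⟨hy hyAB, hyAB.2⟩, hyAB.1⟩
  have hdefect : μ.real ((H ∩ B) \ A) ≤ μ.real (H ∩ B) - μ.real (A ∩ B) := by linarith
  refine min_le_of_right_le ?_
  rw [add_mul, one_mul, div_mul_eq_mul_div, ← le_sub_iff_add_le', div_le_iff₀ (by positivity)]
  calc (1 - γ) * μ.real (A ∩ B) ≤ C * (μ.real (H ∩ B) - μ.real (A ∩ B)) :=
        hgain.trans (by gcongr)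
    _ ≤ (μ.real (H ∩ B) - μ.real (A ∩ B)) * (C + 1) := by
        nlinarith [measureReal_nonneg (μ := μ) (s := (H ∩ B) \ A)]

end Measure

section Halo

variable {n : ℕ} {𝓑 : Set (Set (EuclideanSpace ℝ (Fin n)))}

lemma HomothecyInvariant.homothety_image_mem (h𝓑 : HomothecyInvariant n 𝓑) {B} (hB : B ∈ 𝓑)
    (y : EuclideanSpace ℝ (Fin n)) {r : ℝ} (hr : 0 < r) : homothety y r '' B ∈ 𝓑 := by
  convert h𝓑 B hB (y - r • y) r hr using 1
  refine image_congr fun x _ => ?_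
  rw [homothety_apply, vsub_eq_sub, vadd_eq_add]
  module

lemma homothety_image_subset_halo (h𝓑 : ∀ B ∈ 𝓑, IsOpen B ∧ Bornology.IsBounded B ∧ Convex ℝ B)
    (h𝓑inv : HomothecyInvariant n 𝓑) {A B : Set (EuclideanSpace ℝ (Fin n))} (hB : B ∈ 𝓑)
    {y : EuclideanSpace ℝ (Fin n)} (hy : y ∈ B) {ρ β γ : ℝ} (hρ : 0 < ρ) (hβγ : β < γ)
    (h : γ * volume.real (homothety y ρ '' B) ≤ volume.real (A ∩ homothety y ρ '' B)) :
    homothety y ρ '' B ⊆ halo n 𝓑 A β := by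
  have hD := h𝓑inv.homothety_image_mem hB y hρ
  obtain ⟨hDo, hDb, -⟩ := h𝓑 _ hD
  have hpos : 0 < volume.real (homothety y ρ '' B) := ENNReal.toReal_pos
    (hDo.measure_pos volume ⟨y, y, hy, homothety_apply_same _ _⟩).ne' hDb.measure_lt_top.ne
  exact fun _ hx => ⟨_, hD, hx, (mul_lt_mul_of_pos_right hβγ hpos).trans_le h⟩

end Halo

theorem halo_embedding_convex_general (n : ℕ) :
    ∃ c κ : ℝ, 0 < c ∧ 0 < κ ∧
      ∀ 𝓑 : Set (Set (EuclideanSpace ℝ (Fin n))),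
        (∀ B ∈ 𝓑, IsOpen B ∧ Bornology.IsBounded B ∧ Convex ℝ B) →
        HomothecyInvariant n 𝓑 →
        ∀ E : Set (EuclideanSpace ℝ (Fin n)), MeasurableSet E → volume E < ⊤ →
        ∀ α ∈ Set.Ioo (0 : ℝ) 1, ∀ δ : ℝ, 0 < δ → δ < κ * (1 - α) →
          halo n 𝓑 E α ⊆
            halo n 𝓑 (halo n 𝓑 E (1 - 3 * (n : ℝ) ^ ((3 * (n : ℝ)) / 2) * δ))
              (α * (1 + c * (min α (1 - α)) ^ (2 * n) * δ)) := by
  obtain ⟨C, hC⟩ :=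
    exists_uniform_isDilateVitaliConstant (volume : Measure (EuclideanSpace ℝ (Fin n)))
  refine ⟨1 / (C + 1), 1, by positivity, one_pos, ?_⟩
  rintro 𝓑 h𝓑 h𝓑inv A hA - α ⟨hα₀, hα₁⟩ δ hδ hδα x ⟨B, hB, hxB, hαB⟩
  obtain ⟨hBo, hBb, hBc⟩ := h𝓑 B hB
  refine ⟨B, hB, hxB, ?_⟩
  have hK : 1 ≤ (n : ℝ) ^ ((3 * (n : ℝ)) / 2) := by
    rcases Nat.eq_zero_or_pos n with rfl | hn
    · simp
    · exact Real.one_le_rpow (by exact_mod_cast hn) (by positivity)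
  have hgain := (hC B hBo hBb hBc).min_le_measureReal_inter volume hA hBo hBb hBc
    (γ := 1 - δ) (by linarith) (by linarith) fun y hy ρ hρ =>
      homothety_image_subset_halo h𝓑 h𝓑inv hB hy hρ.1
        (β := 1 - 3 * (n : ℝ) ^ ((3 * (n : ℝ)) / 2) * δ) (by nlinarith)
  rw [sub_sub_cancel] at hgain
  have hcm : 1 / ((C : ℝ) + 1) * (min α (1 - α)) ^ (2 * n) * δ ≤ δ / (C + 1) :=
    calc _ = (min α (1 - α)) ^ (2 * n) * δ / (C + 1) := by ring
      _ ≤ δ / (C + 1) := by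
        gcongr
        exact mul_le_of_le_one_left hδ.le
          (pow_le_one₀ (le_min hα₀.le (by linarith)) ((min_le_left _ _).trans hα₁.le))
  have hb : 0 < volume.real B := ENNReal.toReal_pos
    (hBo.measure_pos volume ⟨x, hxB⟩).ne' hBb.measure_lt_top.ne
  refine lt_of_lt_of_le (lt_min ?_ ?_) hgain
  · refine mul_lt_of_lt_one_left hb ?_
    have : δ / (C + 1) ≤ δ := div_le_self hδ.le (by simp)
    nlinarith
  · calc α * (1 + 1 / (C + 1) * (min α (1 - α)) ^ (2 * n) * δ) * volume.real B
        = (1 + 1 / (C + 1) * (min α (1 - α)) ^ (2 * n) * δ) * (α * volume.real B) := by ring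
      _ ≤ (1 + δ / (C + 1)) * (α * volume.real B) := by gcongr
      _ < (1 + δ / (C + 1)) * volume.real (A ∩ B) := by gcongr; exact hαB

/-- **Embedding of halo sets for homothecy invariant bases of convex sets:** there are
dimensional constants `c_n, κ_n > 0` such that for every measurable set `E` of finite
measure, every `α ∈ (0,1)` and every `0 < δ < κ_n (1-α)`,
`𝓗_{𝓑,α}(E) ⊆ 𝓗_{𝓑, α(1 + c_n min(α,1-α)^{2n} δ)}(𝓗_{𝓑, 1 - 3n^{3n/2} δ}(E))`. -/
theorem halo_embedding_convex (n : ℕ) (hn : 0 < n) :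
    ∃ c κ : ℝ, 0 < c ∧ 0 < κ ∧
      ∀ 𝓑 : Set (Set (EuclideanSpace ℝ (Fin n))),
        (∀ B ∈ 𝓑, IsOpen B ∧ Bornology.IsBounded B ∧ Convex ℝ B) →
        HomothecyInvariant n 𝓑 →
        ∀ E : Set (EuclideanSpace ℝ (Fin n)), MeasurableSet E → volume E < ⊤ →
        ∀ α ∈ Set.Ioo (0 : ℝ) 1, ∀ δ : ℝ, 0 < δ → δ < κ * (1 - α) →
          halo n 𝓑 E α ⊆
            halo n 𝓑 (halo n 𝓑 E (1 - 3 * (n : ℝ) ^ ((3 * (n : ℝ)) / 2) * δ))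
              (α * (1 + c * (min α (1 - α)) ^ (2 * n) * δ)) :=
  halo_embedding_convex_general n
end
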